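/- arXiv:math/0104027 — 6 statements merged into one kernel-verified Lean document; each statement's English description precedes it below -/
import Mathlib

section
/- For a subadditive function f : (0,∞) → [0,∞] satisfying f(uv) ≤ f(u) + f(v) for all u,v > 0, if f(u) < ∞ for almost every u > 0, then f(2) < ∞. -/
/-!
The exceptional set `{u > 0 | f u = ∞}` is null, and so is its image under the smooth map
`u ↦ c / u`. Since `(0, ∞)` is not null, some `u > 0` avoids both sets; then
`f c = f (u * (c / u)) ≤ f u + f (c / u) < ∞`.
-/

open MeasureTheory Set

theorem Real.volume_image_const_div_eq_zero {s : Set ℝ} (hs₀ : (0 : ℝ) ∉ s) (hs : volume s = 0)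
    (c : ℝ) : volume ((c / ·) '' s) = 0 :=
  addHaar_image_eq_zero_of_differentiableOn_of_addHaar_eq_zero volume
    (fun _ hx => ((differentiableAt_const c).div differentiableAt_id
      (ne_of_mem_of_not_mem hx hs₀)).differentiableWithinAt) hs

theorem Real.exists_pos_notMem_and_div_notMem {s : Set ℝ} (hs₀ : (0 : ℝ) ∉ s)
    (hs : volume s = 0) {c : ℝ} (hc : c ≠ 0) : ∃ u > 0, u ∉ s ∧ c / u ∉ s := by
  have hnull : volume (s ∪ (c / ·) '' s) = 0 :=
    measure_union_null hs (volume_image_const_div_eq_zero hs₀ hs c)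
  obtain ⟨u, hu, hus⟩ : (Ioi (0 : ℝ) \ (s ∪ (c / ·) '' s)).Nonempty := by
    refine sdiff_nonempty.mpr fun hsub => ?_
    simpa [Real.volume_Ioi] using measure_mono_null hsub hnull
  rw [mem_union, not_or] at hus
  refine ⟨u, hu, hus.1, fun hcu => hus.2 ⟨c / u, hcu, ?_⟩⟩
  simp only [div_div_cancel₀ hc]

theorem ne_top_of_map_mul_le_add (f : ℝ → ENNReal)
    (hsub : ∀ u v : ℝ, 0 < u → 0 < v → f (u * v) ≤ f u + f v)
    (hae : volume {u : ℝ | u ∈ Ioi (0 : ℝ) ∧ f u = ⊤} = 0) {c : ℝ} (hc : 0 < c) :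
    f c ≠ ⊤ := by
  obtain ⟨u, hu, hfu, hfcu⟩ :=
    Real.exists_pos_notMem_and_div_notMem (fun h => lt_irrefl (0 : ℝ) h.1) hae hc.ne'
  have hcu : 0 < c / u := div_pos hc hu
  have hfin : f u + f (c / u) ≠ ⊤ :=
    ENNReal.add_ne_top.mpr ⟨fun h => hfu ⟨hu, h⟩, fun h => hfcu ⟨hcu, h⟩⟩
  refine ne_top_of_le_ne_top hfin ?_
  simpa only [mul_div_cancel₀ c hu.ne'] using hsub u (c / u) hu hcu

theorem subadditive_ae_finite_at_two (f : ℝ → ENNReal)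
    (hsub : ∀ u v : ℝ, 0 < u → 0 < v → f (u * v) ≤ f u + f v)
    (hae : volume {u : ℝ | u ∈ Ioi (0:ℝ) ∧ f u = ⊤} = 0) :
    f 2 ≠ ⊤ :=
  ne_top_of_map_mul_le_add f hsub hae two_pos
end

section
/- If W : ℝ → (0,∞) is even, measurable, and satisfies ∬ |ln W(λ₁) − ln W(λ₂)|²/(λ₁−λ₂)² dλ₁ dλ₂ < ∞ over ℝ×ℝ, then ∫₀^∞ |ln W(2λ) − ln W(λ)|² (dλ/λ) < ∞. -/
/-!
Write `f = log W` and `F x = ∫ |f x - f μ|² / (x - μ)² dμ`, so that `∫ F < ∞` is the hypothesis.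
For `λ < μ < 2λ`, splitting `f (2λ) - f λ` at `f μ` and using `|2λ - μ|, |μ - λ| ≤ λ` gives
`|f (2λ) - f λ|² / λ² ≤ 2 (|f (2λ) - f μ|² / (2λ - μ)² + |f μ - f λ|² / (μ - λ)²)`.
Integrating over `μ ∈ (λ, 2λ)`, of length `λ`, bounds the integrand at `λ` by `2 (F (2λ) + F λ)`,
and `∫ F (2λ) dλ = ½ ∫ F`.
-/

open MeasureTheory Set ENNReal

noncomputable def sqDiffQuot (f : ℝ → ℝ) (a b : ℝ) : ℝ≥0∞ :=
  ENNReal.ofReal ((f a - f b) ^ 2 / (a - b) ^ 2)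

lemma sqDiffQuot_comm (f : ℝ → ℝ) (a b : ℝ) : sqDiffQuot f a b = sqDiffQuot f b a := by
  rw [sqDiffQuot, sqDiffQuot, ← neg_sub, neg_sq, ← neg_sub b, neg_sq]

lemma measurable_sqDiffQuot {f : ℝ → ℝ} (hf : Measurable f) :
    Measurable (Function.uncurry (sqDiffQuot f)) :=
  ((((hf.comp measurable_fst).sub (hf.comp measurable_snd)).pow_const 2).div
    ((measurable_fst.sub measurable_snd).pow_const 2)).ennreal_ofReal

lemma sq_add_div_sq_le {x y a m b : ℝ} (ham : a < m) (hmb : m < b) :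
    (x + y) ^ 2 / (b - a) ^ 2 ≤ 2 * (x ^ 2 / (b - m) ^ 2 + y ^ 2 / (m - a) ^ 2) := by
  have hx : x ^ 2 / (b - a) ^ 2 ≤ x ^ 2 / (b - m) ^ 2 :=
    div_le_div_of_nonneg_left (sq_nonneg x) (by positivity) (by nlinarith)
  have hy : y ^ 2 / (b - a) ^ 2 ≤ y ^ 2 / (m - a) ^ 2 :=
    div_le_div_of_nonneg_left (sq_nonneg y) (by positivity) (by nlinarith)
  calc (x + y) ^ 2 / (b - a) ^ 2 ≤ 2 * (x ^ 2 + y ^ 2) / (b - a) ^ 2 := by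
        gcongr; nlinarith [sq_nonneg (x - y)]
    _ = 2 * (x ^ 2 / (b - a) ^ 2 + y ^ 2 / (b - a) ^ 2) := by ring
    _ ≤ 2 * (x ^ 2 / (b - m) ^ 2 + y ^ 2 / (m - a) ^ 2) := by gcongr

lemma sqDiffQuot_le_of_mem_Ioo (f : ℝ → ℝ) {a m b : ℝ} (hm : m ∈ Ioo a b) :
    sqDiffQuot f b a ≤ 2 * (sqDiffQuot f b m + sqDiffQuot f a m) := by
  rw [sqDiffQuot_comm f a m, sqDiffQuot, sqDiffQuot, sqDiffQuot,
    ← ENNReal.ofReal_add (by positivity) (by positivity), ← ENNReal.ofReal_ofNat 2,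
    ← ENNReal.ofReal_mul zero_le_two]
  refine ENNReal.ofReal_le_ofReal ?_
  have := sq_add_div_sq_le (x := f b - f m) (y := f m - f a) hm.1 hm.2
  rwa [sub_add_sub_cancel] at this

lemma ofReal_sq_sub_div_le {f : ℝ → ℝ} (hf : Measurable f) (a b : ℝ) :
    ENNReal.ofReal ((f b - f a) ^ 2 / (b - a)) ≤
      2 * ((∫⁻ m, sqDiffQuot f b m) + ∫⁻ m, sqDiffQuot f a m) := by
  calc ENNReal.ofReal ((f b - f a) ^ 2 / (b - a))
      = ∫⁻ _ in Ioo a b, sqDiffQuot f b a := by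
        rw [setLIntegral_const, Real.volume_Ioo, sqDiffQuot, ← ENNReal.ofReal_mul (by positivity)]
        congr 1
        field_simp
    _ ≤ ∫⁻ m in Ioo a b, 2 * (sqDiffQuot f b m + sqDiffQuot f a m) :=
        setLIntegral_mono' measurableSet_Ioo fun m hm => sqDiffQuot_le_of_mem_Ioo f hm
    _ ≤ ∫⁻ m, 2 * (sqDiffQuot f b m + sqDiffQuot f a m) := setLIntegral_le_lintegral _ _
    _ = 2 * ((∫⁻ m, sqDiffQuot f b m) + ∫⁻ m, sqDiffQuot f a m) := by
        rw [lintegral_const_mul' _ _ ofNat_ne_top,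
          lintegral_add_left (measurable_sqDiffQuot hf).of_uncurry_left]

lemma lintegral_comp_mul_left (F : ℝ → ℝ≥0∞) {c : ℝ} (hc : c ≠ 0) :
    ∫⁻ x, F (c * x) = ENNReal.ofReal |c⁻¹| * ∫⁻ x, F x := by
  calc ∫⁻ x, F (c * x) = ∫⁻ x, F x ∂(Measure.map (c * ·) volume) :=
        (lintegral_map_equiv F (MeasurableEquiv.mulLeft₀ c hc)).symm
    _ = ENNReal.ofReal |c⁻¹| * ∫⁻ x, F x := by
        rw [Real.map_volume_mul_left hc, lintegral_smul_measure, smul_eq_mul]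

theorem dyadic_dilation_integral_finite_general (W : ℝ → ℝ)
    (hW : Measurable W)
    (hfin : (∫⁻ l1 : ℝ, ∫⁻ l2 : ℝ,
        ENNReal.ofReal ((Real.log (W l1) - Real.log (W l2))^2 / (l1 - l2)^2)) < ⊤) :
    (∫⁻ l in Ioi (0:ℝ),
        ENNReal.ofReal ((Real.log (W (2 * l)) - Real.log (W l))^2 / l)) < ⊤ := by
  set f := fun x => Real.log (W x)
  have hf : Measurable f := Real.measurable_log.comp hW
  set F := fun x => ∫⁻ m, sqDiffQuot f x m
  have hF : Measurable F := (measurable_sqDiffQuot hf).lintegral_prod_right'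
  have hFfin : ∫⁻ x, F x < ⊤ := hfin
  calc ∫⁻ l in Ioi (0:ℝ), ENNReal.ofReal ((f (2 * l) - f l) ^ 2 / l)
      ≤ ∫⁻ l in Ioi (0:ℝ), 2 * (F (2 * l) + F l) := by
        refine lintegral_mono fun l => ?_
        have h2l : 2 * l - l = l := by ring
        simpa only [h2l] using ofReal_sq_sub_div_le hf l (2 * l)
    _ ≤ ∫⁻ l, 2 * (F (2 * l) + F l) := setLIntegral_le_lintegral _ _
    _ = 2 * (ENNReal.ofReal |2⁻¹| * (∫⁻ x, F x) + ∫⁻ x, F x) := by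
        rw [lintegral_const_mul' _ _ ofNat_ne_top,
          lintegral_add_right _ hF, lintegral_comp_mul_left F two_ne_zero]
    _ < ⊤ := by have := hFfin.ne; finiteness

theorem dyadic_dilation_integral_finite (W : ℝ → ℝ)
    (hW : Measurable W) (hpos : ∀ x, 0 < W x) (heven : ∀ x, W (-x) = W x)
    (hfin : (∫⁻ l1 : ℝ, ∫⁻ l2 : ℝ,
        ENNReal.ofReal ((Real.log (W l1) - Real.log (W l2))^2 / (l1 - l2)^2)) < ⊤) :
    (∫⁻ l in Ioi (0:ℝ),
        ENNReal.ofReal ((Real.log (W (2 * l)) - Real.log (W l))^2 / l)) < ⊤ :=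
  dyadic_dilation_integral_finite_general W hW hfin
end

section
/- If W : ℝ → (0,∞) is smooth, even, strictly positive, and W(λ) = |λ|^α for |λ| ≥ R (for some R > 1 and α ≠ 0), then ∬_{ℝ×ℝ} |ln W(λ₁) − ln W(λ₂)|²/(λ₁−λ₂)² dλ₁ dλ₂ = ∞. -/
open MeasureTheory Set

theorem power_density_not_offwhite (W : ℝ → ℝ) (α R : ℝ)
    (hsmooth : ContDiff ℝ (⊤ : ℕ∞) W) (hpos : ∀ x, 0 < W x) (heven : ∀ x, W (-x) = W x)
    (hR : 1 < R) (hα : α ≠ 0)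
    (hW : ∀ x : ℝ, R ≤ |x| → W x = |x| ^ α) :
    (∫⁻ l1 : ℝ, ∫⁻ l2 : ℝ,
        ENNReal.ofReal ((Real.log (W l1) - Real.log (W l2))^2 / (l1 - l2)^2)) = ⊤ := by
  have hR0 : (0:ℝ) < R := by linarith
  set c : ℝ := α ^ 2 * Real.log 2 ^ 2 / 4 with hc
  have hlog2 : 0 < Real.log 2 := Real.log_pos (by norm_num)
  have hc0 : 0 < c := by
    have : 0 < α ^ 2 := by positivity
    positivity
  -- The divergent minorant integral
  have key : ∫⁻ x in Ioi R, ENNReal.ofReal (c / x) = ⊤ := by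
    by_contra h
    have hmeas : AEStronglyMeasurable (fun x : ℝ => c / x)
        (volume.restrict (Ioi R)) :=
      (measurable_const.div measurable_id).aestronglyMeasurable
    have hnn : 0 ≤ᵐ[volume.restrict (Ioi R)] fun x : ℝ => c / x := by
      refine (ae_restrict_iff' measurableSet_Ioi).2 (Filter.Eventually.of_forall ?_)
      intro x hx
      exact div_nonneg hc0.le (le_of_lt (hR0.trans hx))
    have hint : Integrable (fun x : ℝ => c / x) (volume.restrict (Ioi R)) :=
      (lintegral_ofReal_ne_top_iff_integrable hmeas hnn).1 h
    have hint2 : IntegrableOn (fun x : ℝ => x⁻¹) (Ioi R) := by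
      have := hint.const_mul c⁻¹
      refine (integrable_congr (Filter.Eventually.of_forall fun x => ?_)).1 this
      field_simp
    exact not_IntegrableOn_Ioi_inv hint2
  rw [eq_top_iff, ← key, ← lintegral_indicator measurableSet_Ioi (fun x => ENNReal.ofReal (c / x))]
  refine lintegral_mono fun l1 => ?_
  rcases le_or_gt l1 R with h1 | h1
  · simp [indicator_of_notMem (fun hx => absurd (mem_Ioi.1 hx) (not_lt.2 h1))]
  · rw [indicator_of_mem (mem_Ioi.2 h1)]
    have hl1 : (0:ℝ) < l1 := hR0.trans h1
    -- inner integral lower bound via indicator of Icc (2*l1) (3*l1)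
    calc ENNReal.ofReal (c / l1)
        = ENNReal.ofReal (c / l1 ^ 2) * volume (Icc (2 * l1) (3 * l1)) := by
          rw [Real.volume_Icc, show 3 * l1 - 2 * l1 = l1 by ring,
            ← ENNReal.ofReal_mul (by positivity)]
          congr 1
          field_simp
      _ = ∫⁻ l2 : ℝ, (Icc (2 * l1) (3 * l1)).indicator
            (fun _ => ENNReal.ofReal (c / l1 ^ 2)) l2 := by
          rw [lintegral_indicator_const measurableSet_Icc]
      _ ≤ ∫⁻ l2 : ℝ, ENNReal.ofReal
            ((Real.log (W l1) - Real.log (W l2))^2 / (l1 - l2)^2) := by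
          refine lintegral_mono fun l2 => ?_
          rcases Classical.em (l2 ∈ Icc (2 * l1) (3 * l1)) with h2 | h2
          · rw [indicator_of_mem h2]
            obtain ⟨h2a, h2b⟩ := h2
            have hl2 : (0:ℝ) < l2 := by linarith
            apply ENNReal.ofReal_le_ofReal
            have hWl1 : Real.log (W l1) = α * Real.log l1 := by
              rw [hW l1 (by rw [abs_of_pos hl1]; linarith), abs_of_pos hl1,
                Real.log_rpow hl1]
            have hWl2 : Real.log (W l2) = α * Real.log l2 := by
              rw [hW l2 (by rw [abs_of_pos hl2]; linarith), abs_of_pos hl2,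
                Real.log_rpow hl2]
            have hnum : α ^ 2 * Real.log 2 ^ 2
                ≤ (Real.log (W l1) - Real.log (W l2)) ^ 2 := by
              rw [hWl1, hWl2, show α * Real.log l1 - α * Real.log l2
                = α * (Real.log l1 - Real.log l2) by ring, mul_pow]
              have hlog : Real.log 2 ≤ Real.log l2 - Real.log l1 := by
                rw [← Real.log_div hl2.ne' hl1.ne']
                apply Real.log_le_log (by norm_num)
                rw [le_div_iff₀ hl1]
                linarith
              have : Real.log 2 ^ 2 ≤ (Real.log l1 - Real.log l2) ^ 2 := by
                rw [show (Real.log l1 - Real.log l2) ^ 2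
                  = (Real.log l2 - Real.log l1) ^ 2 by ring]
                exact pow_le_pow_left₀ hlog2.le hlog 2
              nlinarith [sq_nonneg α]
            have hden : (l1 - l2) ^ 2 ≤ 4 * l1 ^ 2 := by nlinarith
            have hdenpos : (0:ℝ) < (l1 - l2) ^ 2 := by nlinarith
            calc c / l1 ^ 2 = α ^ 2 * Real.log 2 ^ 2 / (4 * l1 ^ 2) := by
                  rw [hc]; field_simp
              _ ≤ (Real.log (W l1) - Real.log (W l2)) ^ 2 / (l1 - l2) ^ 2 :=
                  div_le_div₀ (by positivity) hnum hdenpos hden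
          · simp [indicator_of_notMem h2]
end

section
/- If W : ℝ → (0,∞) is smooth, even, strictly positive, and W(λ) = (ln|λ|)^α for |λ| ≥ R (for some R > e and any real α), then ∬_{ℝ×ℝ} |ln W(λ₁) − ln W(λ₂)|²/(λ₁−λ₂)² dλ₁ dλ₂ < ∞. -/
set_option maxHeartbeats 2000000

open MeasureTheory Set
open scoped ENNReal

namespace OffWhite

lemma log_div_le {u v : ℝ} (hv : 0 < v) (hvu : v ≤ u) :
    Real.log u - Real.log v ≤ (u - v) / v := by
  have hu : 0 < u := lt_of_lt_of_le hv hvu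
  rw [← Real.log_div hu.ne' hv.ne']
  have h2 : Real.log (u / v) ≤ u / v - 1 := Real.log_le_sub_one_of_pos (div_pos hu hv)
  have h3 : u / v - 1 = (u - v) / v := by field_simp
  linarith

lemma log_le_8rpow {t : ℝ} (ht : 0 ≤ t) : Real.log t ≤ 8 * t ^ ((1:ℝ)/8) := by
  have := Real.log_le_rpow_div ht (by norm_num : (0:ℝ) < 1/8)
  have h : t ^ ((1:ℝ)/8) / (1/8) = 8 * t ^ ((1:ℝ)/8) := by ring
  linarith

lemma sq_log_le {t : ℝ} (ht : 1 ≤ t) : (Real.log t)^2 ≤ 64 * t ^ ((1:ℝ)/4) := by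
  have ht0 : (0:ℝ) ≤ t := le_trans zero_le_one ht
  have h0 : 0 ≤ Real.log t := Real.log_nonneg ht
  have h1 := log_le_8rpow ht0
  calc (Real.log t)^2 ≤ (8 * t ^ ((1:ℝ)/8))^2 := by nlinarith [Real.rpow_nonneg ht0 ((1:ℝ)/8)]
    _ = 64 * t ^ ((1:ℝ)/4) := by
        rw [mul_pow, ← Real.rpow_natCast (t ^ ((1:ℝ)/8)) 2, ← Real.rpow_mul ht0]
        norm_num

lemma two_lt_R {R : ℝ} (hR : Real.exp 1 < R) : 2 < R := by
  have := Real.exp_one_gt_d9; linarith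

lemma diff_le_main {R b c : ℝ} (hR : Real.exp 1 < R) (hb : R ≤ b) (hbc : b ≤ c) :
    0 ≤ Real.log (Real.log c) - Real.log (Real.log b) ∧
    Real.log (Real.log c) - Real.log (Real.log b) ≤ (Real.log c - Real.log b) / Real.log b := by
  have hb0 : 0 < b := lt_of_lt_of_le (lt_trans (Real.exp_pos 1) hR) hb
  have hlb : 1 < Real.log b := by
    rw [← Real.log_exp 1]
    exact Real.log_lt_log (Real.exp_pos 1) (lt_of_lt_of_le hR hb)
  have hlblc : Real.log b ≤ Real.log c := Real.log_le_log hb0 hbc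
  constructor
  · have := Real.log_le_log (lt_trans one_pos hlb) hlblc
    linarith
  · exact log_div_le (lt_trans one_pos hlb) hlblc

lemma sqrt_le_half {a : ℝ} (ha : 16 ≤ a) : a ^ ((1:ℝ)/2) ≤ a / 2 := by
  have ha0 : (0:ℝ) < a := by linarith
  have h1 : (a ^ ((1:ℝ)/2))^2 = a := by
    rw [← Real.rpow_natCast (a ^ ((1:ℝ)/2)) 2, ← Real.rpow_mul ha0.le]; norm_num
  nlinarith [Real.rpow_nonneg ha0.le ((1:ℝ)/2), sq_nonneg (a ^ ((1:ℝ)/2) - 4)]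

lemma sq_rpow_eighth {t : ℝ} (ht : 0 ≤ t) : (t ^ ((1:ℝ)/8))^2 = t ^ ((1:ℝ)/4) := by
  rw [← Real.rpow_natCast (t ^ ((1:ℝ)/8)) 2, ← Real.rpow_mul ht]; norm_num

lemma sup_meas {f : ℝ → ℝ≥0∞} {s : Set ℝ} (hs : MeasurableSet s) {c : ℝ≥0∞}
    (h : ∀ y ∈ s, f y ≤ c) : ∫⁻ y in s, f y ≤ c * volume s :=
  le_trans (setLIntegral_mono' hs h) (le_of_eq (setLIntegral_const s c))

lemma lint_neg (f : ℝ → ℝ≥0∞) (hf : Measurable f) : ∫⁻ x : ℝ, f (-x) = ∫⁻ x : ℝ, f x := by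
  conv_rhs => rw [← Measure.map_neg_eq_self (volume : Measure ℝ)]
  rw [lintegral_map hf measurable_neg]

lemma lint_neg_set (f : ℝ → ℝ≥0∞) (hf : Measurable f) (s : Set ℝ) (hs : MeasurableSet s)
    (hsym : ∀ x, f (-x) = f x) :
    ∫⁻ y in Neg.neg ⁻¹' s, f y = ∫⁻ y in s, f y := by
  rw [← lintegral_indicator (hs.preimage measurable_neg) f, ← lintegral_indicator hs f,
    ← lint_neg (s.indicator f) (hf.indicator hs)]
  congr 1; funext x
  by_cases hx : -x ∈ s
  · rw [Set.indicator_of_mem hx, Set.indicator_of_mem (by exact hx), hsym]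
  · rw [Set.indicator_of_notMem hx, Set.indicator_of_notMem (by exact hx)]

lemma tail_lint {c C : ℝ} (hc : 0 < c) (hC : 0 ≤ C) :
    ∫⁻ y in {y : ℝ | 2*c ≤ |y|}, ENNReal.ofReal (C * |y| ^ (-(7:ℝ)/4))
      ≤ ENNReal.ofReal (3 * C * c ^ (-(3:ℝ)/4)) := by
  set f : ℝ → ℝ≥0∞ := fun y => ENNReal.ofReal (C * |y| ^ (-(7:ℝ)/4)) with hfdef
  have hfm : Measurable f := by
    apply ENNReal.measurable_ofReal.comp
    exact (measurable_const.mul ((measurable_id.abs).pow measurable_const))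
  have hsym : ∀ x, f (-x) = f x := by intro x; simp [hfdef, abs_neg]
  have hIoi : ∫⁻ y in Ioi c, f y = ENNReal.ofReal (C * ((4:ℝ)/3) * c ^ (-(3:ℝ)/4)) := by
    have hcong : ∫⁻ y in Ioi c, f y = ∫⁻ y in Ioi c, ENNReal.ofReal (C * y ^ (-(7:ℝ)/4)) := by
      apply setLIntegral_congr_fun measurableSet_Ioi
      exact fun y hy => by rw [hfdef]; simp [abs_of_pos (hc.trans hy)]
    rw [hcong]
    have hint : IntegrableOn (fun y : ℝ => C * y ^ (-(7:ℝ)/4)) (Ioi c) :=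
      (integrableOn_Ioi_rpow_of_lt (by norm_num) hc).const_mul C
    rw [← ofReal_integral_eq_lintegral_ofReal hint]
    · congr 1
      rw [integral_const_mul, integral_Ioi_rpow_of_lt (by norm_num) hc]
      ring_nf
    · filter_upwards [ae_restrict_mem measurableSet_Ioi] with y hy
      exact mul_nonneg hC (Real.rpow_nonneg (le_of_lt (hc.trans hy)) _)
  have hsub : {y : ℝ | 2*c ≤ |y|} ⊆ (Neg.neg ⁻¹' (Ioi c)) ∪ Ioi c := by
    intro y hy
    simp only [Set.mem_setOf_eq] at hy
    rcases le_or_gt 0 y with h | h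
    · right; rw [abs_of_nonneg h] at hy; exact lt_of_lt_of_le (by linarith) hy
    · left; simp only [Set.mem_preimage, Set.mem_Ioi]
      rw [abs_of_neg h] at hy; linarith
  calc ∫⁻ y in {y : ℝ | 2*c ≤ |y|}, f y
      ≤ ∫⁻ y in (Neg.neg ⁻¹' (Ioi c)) ∪ Ioi c, f y := lintegral_mono_set hsub
    _ ≤ (∫⁻ y in Neg.neg ⁻¹' (Ioi c), f y) + ∫⁻ y in Ioi c, f y := lintegral_union_le _ _ _
    _ = (∫⁻ y in Ioi c, f y) + ∫⁻ y in Ioi c, f y := by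
        rw [lint_neg_set f hfm _ measurableSet_Ioi hsym]
    _ ≤ ENNReal.ofReal (3 * C * c ^ (-(3:ℝ)/4)) := by
        rw [hIoi, ← ENNReal.ofReal_add (by positivity) (by positivity)]
        apply ENNReal.ofReal_le_ofReal
        have := Real.rpow_nonneg hc.le (-(3:ℝ)/4)
        nlinarith

lemma band_lint {u v C : ℝ} (hu : 0 < u) (huv : u ≤ v) (hC : 0 ≤ C) :
    ∫⁻ y in {y : ℝ | u ≤ |y| ∧ |y| ≤ v}, ENNReal.ofReal (C * |y| ^ (-(1:ℝ)/4))
      ≤ ENNReal.ofReal (3 * C * v ^ ((3:ℝ)/4)) := by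
  have hv : 0 < v := lt_of_lt_of_le hu huv
  set f : ℝ → ℝ≥0∞ := fun y => ENNReal.ofReal (C * |y| ^ (-(1:ℝ)/4)) with hfdef
  have hfm : Measurable f :=
    ENNReal.measurable_ofReal.comp (measurable_const.mul ((measurable_id.abs).pow measurable_const))
  have hsym : ∀ x, f (-x) = f x := by intro x; simp [hfdef, abs_neg]
  have hIoc : ∫⁻ y in Ioc 0 v, f y = ENNReal.ofReal (C * ((4:ℝ)/3) * v ^ ((3:ℝ)/4)) := by
    have hcong : ∫⁻ y in Ioc 0 v, f y = ∫⁻ y in Ioc 0 v, ENNReal.ofReal (C * y ^ (-(1:ℝ)/4)) := by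
      apply setLIntegral_congr_fun measurableSet_Ioc
      exact fun y hy => by rw [hfdef]; simp [abs_of_pos hy.1]
    rw [hcong]
    have hint : IntegrableOn (fun y : ℝ => C * y ^ (-(1:ℝ)/4)) (Ioc 0 v) := by
      have := (intervalIntegral.intervalIntegrable_rpow' (a := 0) (b := v) (r := -(1:ℝ)/4) (by norm_num)).1
      exact this.const_mul C
    rw [← ofReal_integral_eq_lintegral_ofReal hint]
    · congr 1
      rw [integral_const_mul, ← intervalIntegral.integral_of_le hv.le,
        integral_rpow (Or.inl (by norm_num))]
      rw [Real.zero_rpow (by norm_num)]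
      ring_nf
    · filter_upwards [ae_restrict_mem measurableSet_Ioc] with y hy
      exact mul_nonneg hC (Real.rpow_nonneg hy.1.le _)
  have hsub : {y : ℝ | u ≤ |y| ∧ |y| ≤ v} ⊆ (Neg.neg ⁻¹' (Ioc 0 v)) ∪ Ioc 0 v := by
    intro y hy
    obtain ⟨h1, h2⟩ := hy
    rcases le_or_gt 0 y with h | h
    · right; rw [abs_of_nonneg h] at h1 h2; exact ⟨lt_of_lt_of_le hu h1, h2⟩
    · left; simp only [Set.mem_preimage, Set.mem_Ioc]
      rw [abs_of_neg h] at h1 h2; exact ⟨lt_of_lt_of_le hu h1, h2⟩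
  calc ∫⁻ y in {y : ℝ | u ≤ |y| ∧ |y| ≤ v}, f y
      ≤ ∫⁻ y in (Neg.neg ⁻¹' (Ioc 0 v)) ∪ Ioc 0 v, f y := lintegral_mono_set hsub
    _ ≤ (∫⁻ y in Neg.neg ⁻¹' (Ioc 0 v), f y) + ∫⁻ y in Ioc 0 v, f y := lintegral_union_le _ _ _
    _ = (∫⁻ y in Ioc 0 v, f y) + ∫⁻ y in Ioc 0 v, f y := by
        rw [lint_neg_set f hfm _ measurableSet_Ioc hsym]
    _ ≤ ENNReal.ofReal (3 * C * v ^ ((3:ℝ)/4)) := by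
        rw [hIoc, ← ENNReal.ofReal_add (by positivity) (by positivity)]
        apply ENNReal.ofReal_le_ofReal
        have := Real.rpow_nonneg hv.le ((3:ℝ)/4)
        nlinarith

lemma logtail_lint {A C : ℝ} (hA : Real.exp 1 < A) (hC : 0 ≤ C) :
    ∫⁻ x in Ici A, ENNReal.ofReal (C * (x * (Real.log x)^2)⁻¹) < ⊤ := by
  set B := Real.exp 1 with hB
  have hB0 : 0 < B := Real.exp_pos 1
  have hlogB : Real.log B = 1 := Real.log_exp 1
  have hint : IntegrableOn (fun x : ℝ => (x * (Real.log x)^2)⁻¹) (Ioi B) := by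
    have hderiv : ∀ x ∈ Ioi B, HasDerivAt (fun x : ℝ => -(Real.log x)⁻¹)
        ((x * (Real.log x)^2)⁻¹) x := by
      intro x hx
      have hx0 : 0 < x := lt_trans hB0 hx
      have hlx : 1 < Real.log x := by
        rw [← hlogB]; exact Real.log_lt_log hB0 hx
      have h1 : HasDerivAt Real.log x⁻¹ x := Real.hasDerivAt_log hx0.ne'
      have h2 := (h1.inv (by linarith : Real.log x ≠ 0)).neg
      have e : (x * (Real.log x)^2)⁻¹ = -(-x⁻¹ / Real.log x ^ 2) := by ring
      rw [e]; exact h2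
    have g'pos : ∀ x ∈ Ioi B, 0 ≤ (x * (Real.log x)^2)⁻¹ := by
      intro x hx
      have hx0 : 0 < x := lt_trans hB0 hx
      positivity
    have hcont : ContinuousWithinAt (fun x : ℝ => -(Real.log x)⁻¹) (Ici B) B := by
      apply ContinuousAt.continuousWithinAt
      exact ((Real.continuousAt_log hB0.ne').inv₀ (by rw [hlogB]; norm_num)).neg
    have htend : Filter.Tendsto (fun x : ℝ => -(Real.log x)⁻¹) Filter.atTop (nhds 0) := by
      have := Real.tendsto_log_atTop.inv_tendsto_atTop
      simpa using this.neg
    exact integrableOn_Ioi_deriv_of_nonneg hcont hderiv g'pos htend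
  have hint2 : IntegrableOn (fun x : ℝ => C * (x * (Real.log x)^2)⁻¹) (Ioi B) :=
    hint.const_mul C
  calc ∫⁻ x in Ici A, ENNReal.ofReal (C * (x * (Real.log x)^2)⁻¹)
      ≤ ∫⁻ x in Ioi B, ENNReal.ofReal (C * (x * (Real.log x)^2)⁻¹) :=
        lintegral_mono_set (fun x hx => lt_of_lt_of_le hA hx)
    _ ≤ ∫⁻ x in Ioi B, ‖C * (x * (Real.log x)^2)⁻¹‖ₑ :=
        lintegral_mono fun x => Real.ofReal_le_enorm _
    _ < ⊤ := hint2.2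

lemma regT2 {α R x y : ℝ} (hR : Real.exp 1 < R) (hx : 4*R^2 ≤ |x|)
    (hy1 : |x| ^ ((1:ℝ)/2) ≤ |y|) (hy2 : |y| ≤ |x|/2) :
    (α * Real.log (Real.log |x|) - α * Real.log (Real.log |y|))^2 / (x - y)^2
      ≤ (1024*α^2 * (|x| ^ (-(7:ℝ)/4) / (Real.log |x|)^2)) * |y| ^ (-(1:ℝ)/4) := by
  set a := |x| with hadef
  set b := |y| with hbdef
  have hR2 : 2 < R := two_lt_R hR
  have ha16 : 16 ≤ a := by nlinarith
  have ha0 : 0 < a := by linarith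
  have hb_low : 2*R ≤ b := by
    have h1 : (4*R^2) ^ ((1:ℝ)/2) ≤ a ^ ((1:ℝ)/2) :=
      Real.rpow_le_rpow (by positivity) hx (by norm_num)
    have h2 : (4*R^2) ^ ((1:ℝ)/2) = 2*R := by
      have h3 : 4*R^2 = (2*R)^2 := by ring
      rw [h3, ← Real.rpow_natCast (2*R) 2, ← Real.rpow_mul (by positivity)]
      norm_num
    linarith
  have hb0 : 0 < b := by linarith
  have hRb : R ≤ b := by linarith
  have hba : b ≤ a := by linarith
  have hla1 : 1 < Real.log a := by
    rw [← Real.log_exp 1]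
    exact Real.log_lt_log (Real.exp_pos 1) (by nlinarith)
  have hlb0 : 0 < Real.log b := by
    have : 1 < Real.log b := by
      rw [← Real.log_exp 1]; exact Real.log_lt_log (Real.exp_pos 1) (by linarith)
    linarith
  have hlogba : Real.log a ≤ 2 * Real.log b := by
    have h1 : Real.log (a ^ ((1:ℝ)/2)) ≤ Real.log b :=
      Real.log_le_log (by positivity) hy1
    rw [Real.log_rpow ha0] at h1
    linarith
  obtain ⟨hd0, hd1⟩ := diff_le_main hR hRb hba
  set d := Real.log (Real.log a) - Real.log (Real.log b) with hddef
  have hnum0 : 0 ≤ Real.log a - Real.log b := by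
    have := Real.log_le_log hb0 hba; linarith
  have hd2 : d ≤ 2 * (Real.log a - Real.log b) / Real.log a := by
    have h1 : (Real.log a - Real.log b) / Real.log b
        ≤ (Real.log a - Real.log b) / ((1/2) * Real.log a) := by
      apply div_le_div_of_nonneg_left hnum0 (by linarith) (by linarith)
    have h2 : (Real.log a - Real.log b) / ((1/2) * Real.log a)
        = 2 * (Real.log a - Real.log b) / Real.log a := by
      field_simp
    linarith
  have hd3 : d ≤ 16 * (a/b) ^ ((1:ℝ)/8) / Real.log a := by
    have h1 : Real.log a - Real.log b = Real.log (a/b) := (Real.log_div ha0.ne' hb0.ne').symm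
    have h2 : Real.log (a/b) ≤ 8 * (a/b) ^ ((1:ℝ)/8) := log_le_8rpow (by positivity)
    have h3 : 2 * (Real.log a - Real.log b) / Real.log a
        ≤ 2 * (8 * (a/b) ^ ((1:ℝ)/8)) / Real.log a := by
      apply div_le_div_of_nonneg_right ?_ (by linarith)
      rw [h1]; linarith
    calc d ≤ 2 * (Real.log a - Real.log b) / Real.log a := hd2
      _ ≤ 2 * (8 * (a/b) ^ ((1:ℝ)/8)) / Real.log a := h3
      _ = 16 * (a/b) ^ ((1:ℝ)/8) / Real.log a := by ring
  -- numerator bound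
  have hD : (α * Real.log (Real.log a) - α * Real.log (Real.log b))^2
      ≤ 256 * α^2 * ((a/b) ^ ((1:ℝ)/4)) / (Real.log a)^2 := by
    have h1 : (α * Real.log (Real.log a) - α * Real.log (Real.log b))^2 = α^2 * d^2 := by
      rw [hddef]; ring
    have h2 : d^2 ≤ (16 * (a/b) ^ ((1:ℝ)/8) / Real.log a)^2 := by
      apply pow_le_pow_left₀ hd0 hd3
    have h3 : (16 * (a/b) ^ ((1:ℝ)/8) / Real.log a)^2
        = 256 * ((a/b) ^ ((1:ℝ)/4)) / (Real.log a)^2 := by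
      rw [div_pow, mul_pow, sq_rpow_eighth (by positivity : (0:ℝ) ≤ a/b)]
      norm_num
    calc (α * Real.log (Real.log a) - α * Real.log (Real.log b))^2 = α^2 * d^2 := h1
      _ ≤ α^2 * (256 * ((a/b) ^ ((1:ℝ)/4)) / (Real.log a)^2) := by
          apply mul_le_mul_of_nonneg_left ?_ (sq_nonneg α)
          rw [← h3]; exact h2
      _ = 256 * α^2 * ((a/b) ^ ((1:ℝ)/4)) / (Real.log a)^2 := by ring
  -- denominator bound
  have hden : a^2/4 ≤ (x - y)^2 := by
    have h1 : a - b ≤ |x - y| := le_trans (abs_sub_abs_le_abs_sub x y) le_rfl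
    have h2 : a/2 ≤ |x - y| := by linarith
    have h3 : (a/2)^2 ≤ |x - y|^2 := by
      apply pow_le_pow_left₀ (by positivity) h2
    rw [sq_abs] at h3
    nlinarith
  have hQ : (α * Real.log (Real.log a) - α * Real.log (Real.log b))^2 / (x - y)^2
      ≤ (256 * α^2 * ((a/b) ^ ((1:ℝ)/4)) / (Real.log a)^2) / (a^2/4) :=
    div_le_div₀ (by positivity) hD (by positivity) hden
  refine le_trans hQ (le_of_eq ?_)
  have e1 : (a/b) ^ ((1:ℝ)/4) = a^((1:ℝ)/4) / b^((1:ℝ)/4) := Real.div_rpow ha0.le hb0.le _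
  have e2 : a ^ (-(7:ℝ)/4) = a^((1:ℝ)/4) / a^2 := by
    rw [← Real.rpow_natCast a 2, ← Real.rpow_sub ha0]; norm_num
  have e3 : b ^ (-(1:ℝ)/4) = (b^((1:ℝ)/4))⁻¹ := by
    rw [show (-(1:ℝ)/4) = -((1:ℝ)/4) by norm_num, Real.rpow_neg hb0.le]
  have hb4 : b^((1:ℝ)/4) ≠ 0 := by positivity
  have hla0 : Real.log a ≠ 0 := by linarith
  have ha2 : (a:ℝ)^2 ≠ 0 := by positivity
  rw [e1, e2, e3]
  field_simp
  ring

lemma regT4 {α R x y : ℝ} (hR : Real.exp 1 < R) (hx : 4*R^2 ≤ |x|) (hy : 2*|x| ≤ |y|) :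
    (α * Real.log (Real.log |x|) - α * Real.log (Real.log |y|))^2 / (x - y)^2
      ≤ (256*α^2 * (|x| ^ (-(1:ℝ)/4) / (Real.log |x|)^2)) * |y| ^ (-(7:ℝ)/4) := by
  set a := |x| with hadef
  set b := |y| with hbdef
  have hR2 : 2 < R := two_lt_R hR
  have ha16 : 16 ≤ a := by nlinarith
  have ha0 : 0 < a := by linarith
  have hb0 : 0 < b := by linarith
  have hRa : R ≤ a := by nlinarith
  have hab : a ≤ b := by linarith
  have hla1 : 1 < Real.log a := by
    rw [← Real.log_exp 1]
    exact Real.log_lt_log (Real.exp_pos 1) (by nlinarith)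
  obtain ⟨hd0, hd1⟩ := diff_le_main hR hRa hab
  set d := Real.log (Real.log b) - Real.log (Real.log a) with hddef
  have hd3 : d ≤ 8 * (b/a) ^ ((1:ℝ)/8) / Real.log a := by
    have h1 : Real.log b - Real.log a = Real.log (b/a) := (Real.log_div hb0.ne' ha0.ne').symm
    have h2 : Real.log (b/a) ≤ 8 * (b/a) ^ ((1:ℝ)/8) := log_le_8rpow (by positivity)
    have h3 : (Real.log b - Real.log a) / Real.log a ≤ (8 * (b/a) ^ ((1:ℝ)/8)) / Real.log a := by
      apply div_le_div_of_nonneg_right ?_ (by linarith)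
      rw [h1]; exact h2
    exact le_trans hd1 h3
  have hD : (α * Real.log (Real.log a) - α * Real.log (Real.log b))^2
      ≤ 64 * α^2 * ((b/a) ^ ((1:ℝ)/4)) / (Real.log a)^2 := by
    have h1 : (α * Real.log (Real.log a) - α * Real.log (Real.log b))^2 = α^2 * d^2 := by
      rw [hddef]; ring
    have h2 : d^2 ≤ (8 * (b/a) ^ ((1:ℝ)/8) / Real.log a)^2 := pow_le_pow_left₀ hd0 hd3 2
    have h3 : (8 * (b/a) ^ ((1:ℝ)/8) / Real.log a)^2
        = 64 * ((b/a) ^ ((1:ℝ)/4)) / (Real.log a)^2 := by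
      rw [div_pow, mul_pow, sq_rpow_eighth (by positivity : (0:ℝ) ≤ b/a)]
      norm_num
    calc (α * Real.log (Real.log a) - α * Real.log (Real.log b))^2 = α^2 * d^2 := h1
      _ ≤ α^2 * (64 * ((b/a) ^ ((1:ℝ)/4)) / (Real.log a)^2) := by
          apply mul_le_mul_of_nonneg_left ?_ (sq_nonneg α)
          rw [← h3]; exact h2
      _ = 64 * α^2 * ((b/a) ^ ((1:ℝ)/4)) / (Real.log a)^2 := by ring
  have hden : b^2/4 ≤ (x - y)^2 := by
    have h1 : b - a ≤ |x - y| := by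
      have := abs_sub_abs_le_abs_sub y x
      rw [abs_sub_comm y x] at this
      linarith
    have h2 : b/2 ≤ |x - y| := by linarith
    have h3 : (b/2)^2 ≤ |x - y|^2 := pow_le_pow_left₀ (by positivity) h2 2
    rw [sq_abs] at h3
    nlinarith
  have hQ : (α * Real.log (Real.log a) - α * Real.log (Real.log b))^2 / (x - y)^2
      ≤ (64 * α^2 * ((b/a) ^ ((1:ℝ)/4)) / (Real.log a)^2) / (b^2/4) :=
    div_le_div₀ (by positivity) hD (by positivity) hden
  refine le_trans hQ (le_of_eq ?_)
  have e1 : (b/a) ^ ((1:ℝ)/4) = b^((1:ℝ)/4) / a^((1:ℝ)/4) := Real.div_rpow hb0.le ha0.le _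
  have e2 : b ^ (-(7:ℝ)/4) = b^((1:ℝ)/4) / b^2 := by
    rw [← Real.rpow_natCast b 2, ← Real.rpow_sub hb0]; norm_num
  have e3 : a ^ (-(1:ℝ)/4) = (a^((1:ℝ)/4))⁻¹ := by
    rw [show (-(1:ℝ)/4) = -((1:ℝ)/4) by norm_num, Real.rpow_neg ha0.le]
  have ha4 : a^((1:ℝ)/4) ≠ 0 := by positivity
  have hla0 : Real.log a ≠ 0 := by linarith
  have hb2 : (b:ℝ)^2 ≠ 0 := by positivity
  rw [e1, e2, e3]
  field_simp
  ring

lemma regT3 {α R x y : ℝ} (hR : Real.exp 1 < R) (hx : 4*R^2 ≤ |x|)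
    (hy1 : |x|/2 ≤ |y|) (hy2 : |y| ≤ 2*|x|) :
    (α * Real.log (Real.log |x|) - α * Real.log (Real.log |y|))^2 / (x - y)^2
      ≤ 16*α^2 / (|x|^2 * (Real.log |x|)^2) := by
  set a := |x| with hadef
  set b := |y| with hbdef
  have hR2 : 2 < R := two_lt_R hR
  have ha16 : 16 ≤ a := by nlinarith
  have ha0 : 0 < a := by linarith
  have hb0 : 0 < b := by linarith
  have hla1 : 1 < Real.log a := by
    rw [← Real.log_exp 1]
    exact Real.log_lt_log (Real.exp_pos 1) (by nlinarith)
  by_cases hxy : x = y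
  · have hz : ((x - y)^2 : ℝ) = 0 := by rw [hxy]; ring
    rw [hz, div_zero]
    positivity
  have hxy2 : 0 < (x - y)^2 := by
    have : x - y ≠ 0 := sub_ne_zero.mpr hxy
    positivity
  have habs : |a - b| ≤ |x - y| := by
    have := abs_sub_abs_le_abs_sub x y
    have h2 := abs_sub_abs_le_abs_sub y x
    rw [abs_sub_comm y x] at h2
    rcases le_total a b with h | h
    · rw [abs_of_nonpos (by linarith)]; linarith
    · rw [abs_of_nonneg (by linarith)]; linarith
  have hmR : R ≤ a/2 := by nlinarith
  have hlhalf : Real.log a / 2 ≤ Real.log (a/2) := by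
    have h1 : a ^ ((1:ℝ)/2) ≤ a/2 := sqrt_le_half ha16
    have h2 : Real.log (a ^ ((1:ℝ)/2)) ≤ Real.log (a/2) :=
      Real.log_le_log (by positivity) h1
    rw [Real.log_rpow ha0] at h2
    linarith
  -- in both cases, |diff| ≤ 4 * |x-y| / (a * log a)
  have key : |Real.log (Real.log a) - Real.log (Real.log b)| ≤ 4 * |x - y| / (a * Real.log a) := by
    have hla0 : 0 < Real.log a := by linarith
    rcases le_total b a with h | h
    -- b ≤ a, b ≥ a/2
    · obtain ⟨hd0, hd1⟩ := diff_le_main hR (le_trans hmR hy1) h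
      have hlb : Real.log a / 2 ≤ Real.log b :=
        le_trans hlhalf (Real.log_le_log (by linarith) hy1)
      have h2 : Real.log a - Real.log b ≤ (a - b)/b := log_div_le hb0 h
      have h3 : (a - b)/b ≤ |x - y| * (2/a) := by
        rw [div_le_iff₀ hb0]
        have h4 : a - b ≤ |x - y| := by
          rw [abs_of_nonneg (by linarith)] at habs; linarith
        have h5 : a/2 ≤ b := hy1
        have h6 : 0 ≤ |x-y| := abs_nonneg _
        have e : |x - y| * (2/a) * b = |x - y| * (2*b) / a := by ring
        rw [e, le_div_iff₀ ha0]
        have k1 := mul_le_mul_of_nonneg_right h4 ha0.le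
        have k2 := mul_le_mul_of_nonneg_left h5 h6
        nlinarith
      have h7 : Real.log (Real.log a) - Real.log (Real.log b) ≤ (|x - y| * (2/a)) / (Real.log a / 2) := by
        calc Real.log (Real.log a) - Real.log (Real.log b)
            ≤ (Real.log a - Real.log b) / Real.log b := hd1
          _ ≤ (|x - y| * (2/a)) / Real.log b := by
              apply div_le_div_of_nonneg_right (by linarith) (by linarith)
          _ ≤ (|x - y| * (2/a)) / (Real.log a / 2) := by
              apply div_le_div_of_nonneg_left (by positivity) (by linarith) hlb
      rw [abs_of_nonneg hd0]
      calc Real.log (Real.log a) - Real.log (Real.log b)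
          ≤ (|x - y| * (2/a)) / (Real.log a / 2) := h7
        _ = 4 * |x - y| / (a * Real.log a) := by field_simp; ring
    -- a ≤ b
    · obtain ⟨hd0, hd1⟩ := diff_le_main hR (by nlinarith : R ≤ a) h
      have h2 : Real.log b - Real.log a ≤ (b - a)/a := log_div_le ha0 h
      have h3 : (b - a)/a ≤ |x - y| / a := by
        apply div_le_div_of_nonneg_right ?_ ha0.le
        rw [abs_of_nonpos (by linarith)] at habs; linarith
      have h7 : Real.log (Real.log b) - Real.log (Real.log a) ≤ (|x - y| / a) / Real.log a := by
        calc Real.log (Real.log b) - Real.log (Real.log a)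
            ≤ (Real.log b - Real.log a) / Real.log a := hd1
          _ ≤ (|x - y| / a) / Real.log a := by
              apply div_le_div_of_nonneg_right (by linarith) hla0.le
      rw [abs_sub_comm, abs_of_nonneg hd0]
      calc Real.log (Real.log b) - Real.log (Real.log a)
          ≤ (|x - y| / a) / Real.log a := h7
        _ ≤ 4 * |x - y| / (a * Real.log a) := by
            rw [div_div]
            apply div_le_div_of_nonneg_right ?_ (by positivity)
            nlinarith [abs_nonneg (x-y)]
  -- conclude
  have hla0 : 0 < Real.log a := by linarith
  rw [div_le_iff₀ hxy2]
  have h1 : (α * Real.log (Real.log a) - α * Real.log (Real.log b))^2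
      = α^2 * (Real.log (Real.log a) - Real.log (Real.log b))^2 := by ring
  have h2 : (Real.log (Real.log a) - Real.log (Real.log b))^2
      ≤ (4 * |x - y| / (a * Real.log a))^2 := by
    rw [← sq_abs (Real.log (Real.log a) - Real.log (Real.log b))]
    exact pow_le_pow_left₀ (abs_nonneg _) key 2
  have h3 : (4 * |x - y| / (a * Real.log a))^2 = 16 * (x-y)^2 / (a^2 * (Real.log a)^2) := by
    rw [div_pow, mul_pow, mul_pow, sq_abs]
    norm_num
  have h4 : 16*α^2 / (a^2 * (Real.log a)^2) * (x - y)^2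
      = α^2 * (16 * (x-y)^2 / (a^2 * (Real.log a)^2)) := by ring
  rw [h1, h4]
  apply mul_le_mul_of_nonneg_left ?_ (sq_nonneg α)
  exact le_trans h2 (le_of_eq h3)

lemma sqrt_ge_2R {R a : ℝ} (hR0 : 0 ≤ R) (ha : 4*R^2 ≤ a) : 2*R ≤ a ^ ((1:ℝ)/2) := by
  have h1 : (4*R^2) ^ ((1:ℝ)/2) ≤ a ^ ((1:ℝ)/2) :=
    Real.rpow_le_rpow (by positivity) ha (by norm_num)
  have h2 : (4*R^2) ^ ((1:ℝ)/2) = 2*R := by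
    have h3 : 4*R^2 = (2*R)^2 := by ring
    rw [h3, ← Real.rpow_natCast (2*R) 2, ← Real.rpow_mul (by positivity)]
    norm_num
  linarith

lemma T1_clean {S α a : ℝ} (hS : 0 ≤ S) (ha : 16 ≤ a) :
    (8*S^2 + 512*α^2*a^((1:ℝ)/4)) / (a^2/4) * (2*a^((1:ℝ)/2))
      ≤ (64*S^2 + 4096*α^2) * a^(-(5:ℝ)/4) := by
  have ha0 : (0:ℝ) < a := by linarith
  have ha1 : (1:ℝ) ≤ a := by linarith
  have e1 : a ^ ((1:ℝ)/2) / a^2 = a^(-(3:ℝ)/2) := by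
    rw [← Real.rpow_natCast a 2, ← Real.rpow_sub ha0]; norm_num
  have e2 : a ^ ((1:ℝ)/4) * a^((1:ℝ)/2) / a^2 = a^(-(5:ℝ)/4) := by
    rw [← Real.rpow_add ha0, ← Real.rpow_natCast a 2, ← Real.rpow_sub ha0]; norm_num
  have hmono : a^(-(3:ℝ)/2) ≤ a^(-(5:ℝ)/4) :=
    Real.rpow_le_rpow_of_exponent_le ha1 (by norm_num)
  have lhs_eq : (8*S^2 + 512*α^2*a^((1:ℝ)/4)) / (a^2/4) * (2*a^((1:ℝ)/2))
      = 64*S^2 * (a^((1:ℝ)/2)/a^2) + 4096*α^2 * (a^((1:ℝ)/4) * a^((1:ℝ)/2) / a^2) := by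
    field_simp
    ring
  rw [lhs_eq, e1, e2]
  have h5 : 0 ≤ a^(-(5:ℝ)/4) := Real.rpow_nonneg ha0.le _
  nlinarith [sq_nonneg α, mul_le_mul_of_nonneg_left hmono (by positivity : (0:ℝ) ≤ 64*S^2)]

lemma T2_clean {α a L : ℝ} (ha : 16 ≤ a) (hL : 0 < L) :
    3*(1024*α^2*(a^(-(7:ℝ)/4)/L^2))*(a/2)^((3:ℝ)/4) ≤ 3072*α^2 * (a*L^2)⁻¹ := by
  have ha0 : (0:ℝ) < a := by linarith
  have h1 : (a/2)^((3:ℝ)/4) ≤ a^((3:ℝ)/4) :=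
    Real.rpow_le_rpow (by positivity) (by linarith) (by norm_num)
  have e1 : a^(-(7:ℝ)/4) * a^((3:ℝ)/4) = a⁻¹ := by
    rw [← Real.rpow_add ha0]
    norm_num
    rw [show (-1 : ℝ) = -(1:ℝ) by norm_num, Real.rpow_neg ha0.le, Real.rpow_one]
  have e2 : 3*(1024*α^2*(a^(-(7:ℝ)/4)/L^2))*(a^((3:ℝ)/4))
      = 3072*α^2 * ((a^(-(7:ℝ)/4) * a^((3:ℝ)/4)) / L^2) := by ring
  have step : 3*(1024*α^2*(a^(-(7:ℝ)/4)/L^2))*(a/2)^((3:ℝ)/4)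
      ≤ 3*(1024*α^2*(a^(-(7:ℝ)/4)/L^2))*(a^((3:ℝ)/4)) := by
    apply mul_le_mul_of_nonneg_left h1
    positivity
  rw [e2, e1] at step
  refine le_trans step (le_of_eq ?_)
  rw [mul_inv]
  ring

lemma T4_clean {α a L : ℝ} (ha : 16 ≤ a) (hL : 0 < L) :
    3*(256*α^2*(a^(-(1:ℝ)/4)/L^2))*a^(-(3:ℝ)/4) ≤ 768*α^2 * (a*L^2)⁻¹ := by
  have ha0 : (0:ℝ) < a := by linarith
  have e1 : a^(-(1:ℝ)/4) * a^(-(3:ℝ)/4) = a⁻¹ := by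
    rw [← Real.rpow_add ha0]
    norm_num
    rw [show (-1 : ℝ) = -(1:ℝ) by norm_num, Real.rpow_neg ha0.le, Real.rpow_one]
  have e2 : 3*(256*α^2*(a^(-(1:ℝ)/4)/L^2))*a^(-(3:ℝ)/4)
      = 768*α^2 * ((a^(-(1:ℝ)/4) * a^(-(3:ℝ)/4)) / L^2) := by ring
  rw [e2, e1, mul_inv]
  ring_nf
  exact le_rfl

lemma tail5_lint {A C : ℝ} (hA : 0 < A) (hC : 0 ≤ C) :
    ∫⁻ x in Ici A, ENNReal.ofReal (C * x ^ (-(5:ℝ)/4)) < ⊤ := by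
  have h2 : IntegrableOn (fun x : ℝ => C * x ^ (-(5:ℝ)/4)) (Ioi (A/2)) :=
    (integrableOn_Ioi_rpow_of_lt (by norm_num) (by linarith)).const_mul C
  calc ∫⁻ x in Ici A, ENNReal.ofReal (C * x ^ (-(5:ℝ)/4))
      ≤ ∫⁻ x in Ioi (A/2), ENNReal.ofReal (C * x ^ (-(5:ℝ)/4)) :=
        lintegral_mono_set (fun x hx => by simp only [mem_Ioi]; linarith [mem_Ici.mp hx])
    _ ≤ ∫⁻ x in Ioi (A/2), ‖C * x ^ (-(5:ℝ)/4)‖ₑ :=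
        lintegral_mono fun x => Real.ofReal_le_enorm _
    _ < ⊤ := h2.2

end OffWhite

open OffWhite

theorem log_power_density_offwhite (W : ℝ → ℝ) (α R : ℝ)
    (hsmooth : ContDiff ℝ (⊤ : ℕ∞) W) (hpos : ∀ x, 0 < W x) (heven : ∀ x, W (-x) = W x)
    (hR : Real.exp 1 < R)
    (hW : ∀ x : ℝ, R ≤ |x| → W x = (Real.log |x|) ^ α) :
    (∫⁻ l1 : ℝ, ∫⁻ l2 : ℝ,
        ENNReal.ofReal ((Real.log (W l1) - Real.log (W l2))^2 / (l1 - l2)^2)) < ⊤ := by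
  set g : ℝ → ℝ := fun x => Real.log (W x) with hgdef
  have hWne : ∀ x, W x ≠ 0 := fun x => (hpos x).ne'
  have hg1 : ContDiff ℝ 1 g := (hsmooth.of_le (by simp)).log hWne
  have hgc : Continuous g := hg1.continuous
  have hR2 : 2 < R := two_lt_R hR
  set A : ℝ := 4*R^2 with hAdef
  have hA16 : 16 ≤ A := by nlinarith
  have hA0 : 0 < A := by linarith
  have hAe : Real.exp 1 < A := by
    have := Real.exp_one_lt_d9
    nlinarith
  have hRA : R ≤ A := by nlinarith
  -- formula for g outside [-R, R]
  have hgf : ∀ z : ℝ, R ≤ |z| → g z = α * Real.log (Real.log |z|) := by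
    intro z hz
    have h1 : 1 < |z| := by linarith
    have hlz : 0 < Real.log |z| := Real.log_pos h1
    rw [hgdef]
    simp only
    rw [hW z hz, Real.log_rpow hlz]
  -- uniform bound on [-A, A]
  obtain ⟨S₀, hS₀⟩ :=
    (isCompact_Icc (a := -A) (b := A)).exists_bound_of_continuousOn hgc.continuousOn
  set S := max S₀ 0 with hSdef
  have hS0 : 0 ≤ S := le_max_right _ _
  have hS : ∀ z ∈ Icc (-A) A, |g z| ≤ S := by
    intro z hz
    have := hS₀ z hz
    rw [Real.norm_eq_abs] at this
    exact le_trans this (le_max_left _ _)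
  -- Lipschitz bound on [-2A, 2A]
  have hder : Continuous (deriv g) := hg1.continuous_deriv le_rfl
  obtain ⟨K₀, hK₀⟩ :=
    (isCompact_Icc (a := -(2*A)) (b := 2*A)).exists_bound_of_continuousOn hder.continuousOn
  set K := max K₀ 0 with hKdef
  have hK0 : 0 ≤ K := le_max_right _ _
  have hlip : LipschitzOnWith K.toNNReal g (Icc (-(2*A)) (2*A)) := by
    apply Convex.lipschitzOnWith_of_nnnorm_deriv_le
      (fun z _ => (hg1.differentiable one_ne_zero).differentiableAt) ?_ (convex_Icc _ _)
    intro z hz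
    rw [← NNReal.coe_le_coe, coe_nnnorm, Real.coe_toNNReal _ hK0]
    exact le_trans (hK₀ z hz) (le_max_left _ _)
  have hKlip : ∀ u ∈ Icc (-(2*A)) (2*A), ∀ v ∈ Icc (-(2*A)) (2*A),
      |g u - g v| ≤ K * |u - v| := by
    intro u hu v hv
    have h1 := hlip.dist_le_mul u hu v hv
    rw [Real.dist_eq, Real.dist_eq, Real.coe_toNNReal _ hK0] at h1
    exact h1
  -- constants
  set C4 : ℝ := 64*S^2 + 4096*α^2 with hC4def
  set C5 : ℝ := 3904*α^2 with hC5def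
  set CB : ℝ := 4*A*K^2 + 24*S^2 + 1536*α^2 with hCBdef
  have hC40 : 0 ≤ C4 := by positivity
  have hC50 : 0 ≤ C5 := by positivity
  have hCB0 : 0 ≤ CB := by positivity
  -- the dominating function
  set Φ : ℝ → ℝ≥0∞ := fun x => if |x| < A then ENNReal.ofReal CB
    else ENNReal.ofReal (C4 * |x| ^ (-(5:ℝ)/4))
      + ENNReal.ofReal (C5 * (|x| * (Real.log |x|)^2)⁻¹) with hΦdef
  -- MAIN INNER BOUND
  have main : ∀ x : ℝ,
      (∫⁻ y : ℝ, ENNReal.ofReal ((g x - g y)^2 / (x - y)^2)) ≤ Φ x := by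
    intro x
    set F : ℝ → ℝ≥0∞ := fun y => ENNReal.ofReal ((g x - g y)^2 / (x - y)^2) with hFdef
    by_cases hxA : |x| < A
    ----------------------------------------------------------------
    -- SMALL x
    · have hxmem : x ∈ Icc (-(2*A)) (2*A) := by
        rw [mem_Icc]
        have := abs_lt.mp hxA
        constructor <;> linarith [this.1, this.2]
      have hcov : (univ : Set ℝ) ⊆ Icc (-(2*A)) (2*A) ∪ {y : ℝ | 2*A ≤ |y|} := by
        intro y _
        rcases le_total (|y|) (2*A) with h | h
        · left
          rw [mem_Icc]
          constructor
          · linarith [neg_abs_le y]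
          · linarith [le_abs_self y]
        · right; exact h
      have piece1 : ∫⁻ y in Icc (-(2*A)) (2*A), F y
          ≤ ENNReal.ofReal (4*A*K^2) := by
        have hpt : ∀ y ∈ Icc (-(2*A)) (2*A), F y ≤ ENNReal.ofReal (K^2) := by
          intro y hy
          apply ENNReal.ofReal_le_ofReal
          by_cases hxy : x = y
          · have hz : ((x - y)^2 : ℝ) = 0 := by rw [hxy]; ring
            rw [hz, div_zero]
            positivity
          · have hxy2 : (0:ℝ) < (x - y)^2 := by
              have : x - y ≠ 0 := sub_ne_zero.mpr hxy
              positivity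
            rw [div_le_iff₀ hxy2]
            have h1 := hKlip x hxmem y hy
            calc (g x - g y)^2 = |g x - g y|^2 := (sq_abs _).symm
              _ ≤ (K * |x - y|)^2 := by
                  apply pow_le_pow_left₀ (abs_nonneg _) h1
              _ = K^2 * (x-y)^2 := by rw [mul_pow, sq_abs]
        calc ∫⁻ y in Icc (-(2*A)) (2*A), F y
            ≤ ENNReal.ofReal (K^2) * volume (Icc (-(2*A)) (2*A)) :=
              sup_meas measurableSet_Icc hpt
          _ = ENNReal.ofReal (K^2) * ENNReal.ofReal (4*A) := by
              rw [Real.volume_Icc]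
              congr 1
              ring
          _ = ENNReal.ofReal (4*A*K^2) := by
              rw [← ENNReal.ofReal_mul (by positivity)]
              congr 1
              ring
      have piece2 : ∫⁻ y in {y : ℝ | 2*A ≤ |y|}, F y
          ≤ ENNReal.ofReal (24*S^2 + 1536*α^2) := by
        have hmeas : MeasurableSet {y : ℝ | 2*A ≤ |y|} :=
          measurableSet_le measurable_const measurable_abs
        have hpt : ∀ y ∈ {y : ℝ | 2*A ≤ |y|},
            F y ≤ ENNReal.ofReal ((8*S^2 + 512*α^2) * |y| ^ (-(7:ℝ)/4)) := by
          intro y hy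
          have hb : 2*A ≤ |y| := hy
          have hb0 : (0:ℝ) < |y| := by linarith
          have hb1 : (1:ℝ) ≤ |y| := by linarith
          have hbR : R ≤ |y| := by linarith
          have hbe : Real.exp 1 < |y| := by linarith
          have hlb1 : 1 < Real.log |y| := by
            rw [← Real.log_exp 1]
            exact Real.log_lt_log (Real.exp_pos 1) hbe
          have hgy : |g y| ≤ |α| * Real.log |y| := by
            rw [hgf y hbR, abs_mul]
            apply mul_le_mul_of_nonneg_left ?_ (abs_nonneg α)
            have hll0 : 0 ≤ Real.log (Real.log |y|) := Real.log_nonneg (by linarith)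
            rw [abs_of_nonneg hll0]
            exact Real.log_le_self (by linarith)
          have hgx : |g x| ≤ S := by
            apply hS
            rw [mem_Icc]
            have := abs_lt.mp hxA
            constructor <;> linarith [this.1, this.2]
          have hD : (g x - g y)^2 ≤ 2*S^2 + 128*α^2 * |y| ^ ((1:ℝ)/4) := by
            have h1 : |g x - g y| ≤ S + |α| * Real.log |y| := by
              calc |g x - g y| ≤ |g x| + |g y| := abs_sub _ _
                _ ≤ S + |α| * Real.log |y| := add_le_add hgx hgy
            have h2 : (g x - g y)^2 ≤ (S + |α| * Real.log |y|)^2 := by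
              rw [← sq_abs (g x - g y)]
              apply pow_le_pow_left₀ (abs_nonneg _) h1
            have h3 : (S + |α| * Real.log |y|)^2
                ≤ 2*S^2 + 2*α^2*(Real.log |y|)^2 := by
              nlinarith [sq_nonneg (S - |α| * Real.log |y|), sq_abs α]
            have h4 := sq_log_le hb1
            nlinarith [sq_nonneg α]
          have hden : |y|^2/4 ≤ (x - y)^2 := by
            have h1 : |y| - |x| ≤ |x - y| := by
              have := abs_sub_abs_le_abs_sub y x
              rw [abs_sub_comm y x] at this
              linarith
            have h2 : |y|/2 ≤ |x - y| := by linarith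
            have h3 : (|y|/2)^2 ≤ |x - y|^2 :=
              pow_le_pow_left₀ (by positivity) h2 2
            rw [sq_abs] at h3
            nlinarith
          apply ENNReal.ofReal_le_ofReal
          calc (g x - g y)^2 / (x - y)^2
              ≤ (2*S^2 + 128*α^2 * |y| ^ ((1:ℝ)/4)) / (|y|^2/4) :=
                div_le_div₀ (by positivity) hD (by positivity) hden
            _ ≤ (8*S^2 + 512*α^2) * |y| ^ (-(7:ℝ)/4) := by
                have e2 : |y| ^ (-(7:ℝ)/4) = |y|^((1:ℝ)/4) / |y|^2 := by
                  rw [← Real.rpow_natCast |y| 2, ← Real.rpow_sub hb0]; norm_num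
                have hb14 : 1 ≤ |y| ^ ((1:ℝ)/4) := by
                  have h := Real.rpow_le_rpow_of_exponent_le hb1
                    (by norm_num : (0:ℝ) ≤ 1/4)
                  rwa [Real.rpow_zero] at h
                have lhs_eq : (2*S^2 + 128*α^2 * |y| ^ ((1:ℝ)/4)) / (|y|^2/4)
                    = (8*S^2 + 512*α^2 * |y| ^ ((1:ℝ)/4)) / |y|^2 := by
                  field_simp
                  ring
                rw [lhs_eq, e2, ← mul_div_assoc]
                apply div_le_div_of_nonneg_right ?_ (by positivity)
                nlinarith [sq_nonneg α, sq_nonneg S]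
        calc ∫⁻ y in {y : ℝ | 2*A ≤ |y|}, F y
            ≤ ∫⁻ y in {y : ℝ | 2*A ≤ |y|},
                ENNReal.ofReal ((8*S^2 + 512*α^2) * |y| ^ (-(7:ℝ)/4)) :=
              setLIntegral_mono' hmeas hpt
          _ ≤ ENNReal.ofReal (3 * (8*S^2 + 512*α^2) * A ^ (-(3:ℝ)/4)) :=
              tail_lint hA0 (by positivity)
          _ ≤ ENNReal.ofReal (24*S^2 + 1536*α^2) := by
              apply ENNReal.ofReal_le_ofReal
              have h1 : A ^ (-(3:ℝ)/4) ≤ 1 :=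
                Real.rpow_le_one_of_one_le_of_nonpos (by linarith) (by norm_num)
              nlinarith [Real.rpow_nonneg hA0.le (-(3:ℝ)/4), sq_nonneg α, sq_nonneg S]
      calc (∫⁻ y : ℝ, F y) = ∫⁻ y in (univ : Set ℝ), F y := by
            rw [setLIntegral_univ]
        _ ≤ ∫⁻ y in Icc (-(2*A)) (2*A) ∪ {y : ℝ | 2*A ≤ |y|}, F y :=
            lintegral_mono_set hcov
        _ ≤ (∫⁻ y in Icc (-(2*A)) (2*A), F y) + ∫⁻ y in {y : ℝ | 2*A ≤ |y|}, F y :=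
            lintegral_union_le _ _ _
        _ ≤ ENNReal.ofReal (4*A*K^2) + ENNReal.ofReal (24*S^2 + 1536*α^2) :=
            add_le_add piece1 piece2
        _ = ENNReal.ofReal CB := by
            rw [← ENNReal.ofReal_add (by positivity) (by positivity)]
            congr 1
            rw [hCBdef]
            ring
        _ = Φ x := by rw [hΦdef]; simp only [if_pos hxA]
    ----------------------------------------------------------------
    -- LARGE x
    · push_neg at hxA
      set a : ℝ := |x| with hadef
      have haA : A ≤ a := hxA
      have ha16 : (16:ℝ) ≤ a := by linarith
      have ha0 : (0:ℝ) < a := by linarith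
      have haR : 4*R^2 ≤ a := haA
      have hae : Real.exp 1 < a := by linarith
      have hla1 : 1 < Real.log a := by
        rw [← Real.log_exp 1]
        exact Real.log_lt_log (Real.exp_pos 1) hae
      have hla0 : (0:ℝ) < Real.log a := by linarith
      set s : ℝ := a ^ ((1:ℝ)/2) with hsdef
      have hs0 : 0 < s := by positivity
      have hs2R : 2*R ≤ s := sqrt_ge_2R (by linarith) haR
      have hsh : s ≤ a/2 := sqrt_le_half ha16
      set t1 : Set ℝ := Icc (-s) s with ht1def
      set t2 : Set ℝ := {y : ℝ | s ≤ |y| ∧ |y| ≤ a/2} with ht2def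
      set t3 : Set ℝ := {y : ℝ | a/2 ≤ |y| ∧ |y| ≤ 2*a} with ht3def
      set t4 : Set ℝ := {y : ℝ | 2*a ≤ |y|} with ht4def
      have hcov : (univ : Set ℝ) ⊆ t1 ∪ (t2 ∪ (t3 ∪ t4)) := by
        intro y _
        rcases le_total (|y|) s with h1 | h1
        · left
          rw [ht1def, mem_Icc]
          exact abs_le.mp h1
        · right
          rcases le_total (|y|) (a/2) with h2 | h2
          · left; exact ⟨h1, h2⟩
          · right
            rcases le_total (|y|) (2*a) with h3 | h3
            · left; exact ⟨h2, h3⟩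
            · right; exact h3
      -- T1
      have piece1 : ∫⁻ y in t1, F y
          ≤ ENNReal.ofReal (C4 * a ^ (-(5:ℝ)/4)) := by
        have hpt : ∀ y ∈ t1, F y
            ≤ ENNReal.ofReal ((8*S^2 + 512*α^2*a^((1:ℝ)/4)) / (a^2/4)) := by
          intro y hy
          rw [ht1def, mem_Icc] at hy
          have hys : |y| ≤ s := abs_le.mpr hy
          apply ENNReal.ofReal_le_ofReal
          have hgx : |g x| ≤ S + |α| * Real.log a := by
            rw [hgf x (by first | linarith | (rw [← hadef]; linarith))]
            rw [abs_mul]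
            have hll0 : 0 ≤ Real.log (Real.log a) := Real.log_nonneg (by linarith)
            rw [abs_of_nonneg hll0]
            have : Real.log (Real.log a) ≤ Real.log a := Real.log_le_self (by linarith)
            nlinarith [abs_nonneg α]
          have hgy : |g y| ≤ S + |α| * Real.log a := by
            rcases le_total (|y|) A with hyA | hyA
            · have : |g y| ≤ S := by
                apply hS
                rw [mem_Icc]
                constructor
                · linarith [neg_abs_le y]
                · linarith [le_abs_self y]
              have hlapos : 0 ≤ |α| * Real.log a := by positivity
              linarith
            · have hyR : R ≤ |y| := by linarith
              rw [hgf y hyR, abs_mul]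
              have hly1 : 0 < Real.log |y| := Real.log_pos (by linarith)
              have hll0 : 0 ≤ Real.log (Real.log |y|) := by
                have h1 : 1 ≤ Real.log |y| := by
                  have : Real.exp 1 < |y| := by linarith
                  rw [← Real.log_exp 1]
                  exact (Real.log_lt_log (Real.exp_pos 1) this).le
                exact Real.log_nonneg h1
              rw [abs_of_nonneg hll0]
              have h2 : Real.log (Real.log |y|) ≤ Real.log (Real.log a) := by
                apply Real.log_le_log (by
                  have h1 : 1 ≤ Real.log |y| := by
                    have : Real.exp 1 < |y| := by linarith
                    rw [← Real.log_exp 1]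
                    exact (Real.log_lt_log (Real.exp_pos 1) this).le
                  linarith)
                exact Real.log_le_log (by linarith) (by linarith [hsh])
              have h3 : Real.log (Real.log a) ≤ Real.log a := Real.log_le_self (by linarith)
              nlinarith [abs_nonneg α, hS0]
          have hD : (g x - g y)^2 ≤ 8*S^2 + 512*α^2*a^((1:ℝ)/4) := by
            have h1 : |g x - g y| ≤ 2*S + 2*(|α| * Real.log a) := by
              calc |g x - g y| ≤ |g x| + |g y| := abs_sub _ _
                _ ≤ 2*S + 2*(|α| * Real.log a) := by linarith
            have h2 : (g x - g y)^2 ≤ (2*S + 2*(|α| * Real.log a))^2 := by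
              rw [← sq_abs (g x - g y)]
              apply pow_le_pow_left₀ (abs_nonneg _) h1
            have h3 : (2*S + 2*(|α| * Real.log a))^2
                ≤ 8*S^2 + 8*α^2*(Real.log a)^2 := by
              nlinarith [sq_nonneg (S - |α| * Real.log a), sq_abs α]
            have h4 := sq_log_le (by linarith : (1:ℝ) ≤ a)
            nlinarith [sq_nonneg α]
          have hden : a^2/4 ≤ (x - y)^2 := by
            have h1 : a - |y| ≤ |x - y| := by
              have := abs_sub_abs_le_abs_sub x y
              linarith
            have h2 : a/2 ≤ |x - y| := by linarith
            have h3 : (a/2)^2 ≤ |x - y|^2 := pow_le_pow_left₀ (by positivity) h2 2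
            rw [sq_abs] at h3
            nlinarith
          exact div_le_div₀ (by positivity) hD (by positivity) hden
        calc ∫⁻ y in t1, F y
            ≤ ENNReal.ofReal ((8*S^2 + 512*α^2*a^((1:ℝ)/4)) / (a^2/4)) * volume t1 :=
              sup_meas measurableSet_Icc hpt
          _ = ENNReal.ofReal ((8*S^2 + 512*α^2*a^((1:ℝ)/4)) / (a^2/4))
              * ENNReal.ofReal (2*s) := by
              rw [ht1def, Real.volume_Icc]
              congr 1
              ring
          _ = ENNReal.ofReal ((8*S^2 + 512*α^2*a^((1:ℝ)/4)) / (a^2/4) * (2*s)) := by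
              rw [← ENNReal.ofReal_mul (by positivity)]
          _ ≤ ENNReal.ofReal (C4 * a ^ (-(5:ℝ)/4)) := by
              apply ENNReal.ofReal_le_ofReal
              rw [hC4def]
              exact T1_clean hS0 ha16
      -- T2
      have piece2 : ∫⁻ y in t2, F y
          ≤ ENNReal.ofReal (3072*α^2 * (a * (Real.log a)^2)⁻¹) := by
        have hmeas : MeasurableSet t2 :=
          (measurableSet_le measurable_const measurable_abs).inter
            (measurableSet_le measurable_abs measurable_const)
        have hpt : ∀ y ∈ t2, F y
            ≤ ENNReal.ofReal ((1024*α^2 * (a ^ (-(7:ℝ)/4) / (Real.log a)^2))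
                * |y| ^ (-(1:ℝ)/4)) := by
          intro y hy
          obtain ⟨hy1, hy2⟩ := hy
          have hyR : R ≤ |y| := by linarith [hs2R, hy1, hR2]
          apply ENNReal.ofReal_le_ofReal
          rw [hgf x (by first | linarith | (rw [← hadef]; linarith)), hgf y hyR]
          exact regT2 hR haR hy1 hy2
        calc ∫⁻ y in t2, F y
            ≤ ∫⁻ y in t2, ENNReal.ofReal ((1024*α^2 * (a ^ (-(7:ℝ)/4) / (Real.log a)^2))
                * |y| ^ (-(1:ℝ)/4)) := setLIntegral_mono' hmeas hpt
          _ ≤ ENNReal.ofReal (3 * (1024*α^2 * (a ^ (-(7:ℝ)/4) / (Real.log a)^2))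
                * (a/2) ^ ((3:ℝ)/4)) := band_lint hs0 hsh (by positivity)
          _ ≤ ENNReal.ofReal (3072*α^2 * (a * (Real.log a)^2)⁻¹) := by
              apply ENNReal.ofReal_le_ofReal
              have := T2_clean (α := α) ha16 hla0
              linarith [this]
      -- T3
      have piece3 : ∫⁻ y in t3, F y
          ≤ ENNReal.ofReal (64*α^2 * (a * (Real.log a)^2)⁻¹) := by
        have hmeas : MeasurableSet t3 :=
          (measurableSet_le measurable_const measurable_abs).inter
            (measurableSet_le measurable_abs measurable_const)
        have hpt : ∀ y ∈ t3, F y ≤ ENNReal.ofReal (16*α^2 / (a^2 * (Real.log a)^2)) := by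
          intro y hy
          obtain ⟨hy1, hy2⟩ := hy
          have hyR : R ≤ |y| := by nlinarith
          apply ENNReal.ofReal_le_ofReal
          rw [hgf x (by first | linarith | (rw [← hadef]; linarith)), hgf y hyR]
          exact regT3 hR haR hy1 hy2
        have hsub : t3 ⊆ Icc (-(2*a)) (2*a) := by
          intro y hy
          rw [mem_Icc]
          exact abs_le.mp hy.2
        calc ∫⁻ y in t3, F y
            ≤ ENNReal.ofReal (16*α^2 / (a^2 * (Real.log a)^2)) * volume t3 :=
              sup_meas hmeas hpt
          _ ≤ ENNReal.ofReal (16*α^2 / (a^2 * (Real.log a)^2))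
              * ENNReal.ofReal (4*a) := by
              apply mul_le_mul_right
              calc volume t3 ≤ volume (Icc (-(2*a)) (2*a)) := measure_mono hsub
                _ = ENNReal.ofReal (4*a) := by rw [Real.volume_Icc]; congr 1; ring
          _ = ENNReal.ofReal (16*α^2 / (a^2 * (Real.log a)^2) * (4*a)) := by
              rw [← ENNReal.ofReal_mul (by positivity)]
          _ ≤ ENNReal.ofReal (64*α^2 * (a * (Real.log a)^2)⁻¹) := by
              apply ENNReal.ofReal_le_ofReal
              have h1 : a ≠ 0 := ha0.ne'
              have h2 : Real.log a ≠ 0 := hla0.ne'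
              have e : 16*α^2 / (a^2 * (Real.log a)^2) * (4*a)
                  = 64*α^2 * (a * (Real.log a)^2)⁻¹ := by
                field_simp
                ring
              exact le_of_eq e
      -- T4
      have piece4 : ∫⁻ y in t4, F y
          ≤ ENNReal.ofReal (768*α^2 * (a * (Real.log a)^2)⁻¹) := by
        have hmeas : MeasurableSet t4 :=
          measurableSet_le measurable_const measurable_abs
        have hpt : ∀ y ∈ t4, F y
            ≤ ENNReal.ofReal ((256*α^2 * (a ^ (-(1:ℝ)/4) / (Real.log a)^2))
                * |y| ^ (-(7:ℝ)/4)) := by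
          intro y hy
          have hy4 : 2*a ≤ |y| := hy
          have hyR : R ≤ |y| := by nlinarith
          apply ENNReal.ofReal_le_ofReal
          rw [hgf x (by first | linarith | (rw [← hadef]; linarith)), hgf y hyR]
          exact regT4 hR haR hy4
        calc ∫⁻ y in t4, F y
            ≤ ∫⁻ y in t4, ENNReal.ofReal ((256*α^2 * (a ^ (-(1:ℝ)/4) / (Real.log a)^2))
                * |y| ^ (-(7:ℝ)/4)) := setLIntegral_mono' hmeas hpt
          _ ≤ ENNReal.ofReal (3 * (256*α^2 * (a ^ (-(1:ℝ)/4) / (Real.log a)^2))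
                * a ^ (-(3:ℝ)/4)) := tail_lint ha0 (by positivity)
          _ ≤ ENNReal.ofReal (768*α^2 * (a * (Real.log a)^2)⁻¹) := by
              apply ENNReal.ofReal_le_ofReal
              have := T4_clean (α := α) ha16 hla0
              linarith [this]
      calc (∫⁻ y : ℝ, F y) = ∫⁻ y in (univ : Set ℝ), F y := by rw [setLIntegral_univ]
        _ ≤ ∫⁻ y in t1 ∪ (t2 ∪ (t3 ∪ t4)), F y := lintegral_mono_set hcov
        _ ≤ (∫⁻ y in t1, F y) + ∫⁻ y in t2 ∪ (t3 ∪ t4), F y := lintegral_union_le _ _ _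
        _ ≤ (∫⁻ y in t1, F y) + ((∫⁻ y in t2, F y) + ∫⁻ y in t3 ∪ t4, F y) :=
            add_le_add le_rfl (lintegral_union_le _ _ _)
        _ ≤ (∫⁻ y in t1, F y) + ((∫⁻ y in t2, F y) + ((∫⁻ y in t3, F y) + ∫⁻ y in t4, F y)) :=
            add_le_add le_rfl (add_le_add le_rfl (lintegral_union_le _ _ _))
        _ ≤ ENNReal.ofReal (C4 * a ^ (-(5:ℝ)/4))
            + (ENNReal.ofReal (3072*α^2 * (a * (Real.log a)^2)⁻¹)
              + (ENNReal.ofReal (64*α^2 * (a * (Real.log a)^2)⁻¹)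
                + ENNReal.ofReal (768*α^2 * (a * (Real.log a)^2)⁻¹))) := by
            exact add_le_add piece1 (add_le_add piece2 (add_le_add piece3 piece4))
        _ = ENNReal.ofReal (C4 * a ^ (-(5:ℝ)/4))
            + ENNReal.ofReal (C5 * (a * (Real.log a)^2)⁻¹) := by
            rw [← ENNReal.ofReal_add (by positivity) (by positivity),
              ← ENNReal.ofReal_add (by positivity) (by positivity)]
            congr 2
            rw [hC5def]
            ring
        _ = Φ x := by
            rw [hΦdef]
            simp only
            rw [if_neg (by first | exact not_lt.mpr haA | (rw [← hadef]; exact not_lt.mpr haA))]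
  -- Φ is measurable and even
  have hΦm : Measurable Φ := by
    rw [hΦdef]
    apply Measurable.ite (measurableSet_lt measurable_abs measurable_const)
      measurable_const
    apply Measurable.add (f := fun x => ENNReal.ofReal (C4 * |x| ^ (-(5:ℝ)/4)))
      (g := fun x => ENNReal.ofReal (C5 * (|x| * (Real.log |x|)^2)⁻¹))
    · exact ENNReal.measurable_ofReal.comp
        (measurable_const.mul ((measurable_id.abs).pow measurable_const))
    · apply ENNReal.measurable_ofReal.comp
      apply Measurable.mul measurable_const
      apply Measurable.inv
      exact (measurable_id.abs).mul
        ((Real.measurable_log.comp measurable_abs).pow measurable_const)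
  have hΦsym : ∀ x, Φ (-x) = Φ x := by
    intro x
    rw [hΦdef]
    simp only [abs_neg]
  -- outer integral
  have houter : (∫⁻ x : ℝ, Φ x) < ⊤ := by
    have hIci : (∫⁻ x in Ici (0:ℝ), Φ x) < ⊤ := by
      have hsub : Ici (0:ℝ) ⊆ Ico 0 A ∪ Ici A := by
        intro x hx
        rcases lt_or_ge x A with h | h
        · left; exact ⟨hx, h⟩
        · right; exact h
      have hp1 : (∫⁻ x in Ico (0:ℝ) A, Φ x) ≤ ENNReal.ofReal CB * ENNReal.ofReal A := by
        have hpt : ∀ x ∈ Ico (0:ℝ) A, Φ x ≤ ENNReal.ofReal CB := by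
          intro x hx
          rw [hΦdef]
          simp only
          rw [if_pos (by rw [abs_of_nonneg hx.1]; exact hx.2)]
        calc (∫⁻ x in Ico (0:ℝ) A, Φ x) ≤ ENNReal.ofReal CB * volume (Ico (0:ℝ) A) :=
            sup_meas measurableSet_Ico hpt
          _ = ENNReal.ofReal CB * ENNReal.ofReal A := by
            rw [Real.volume_Ico, sub_zero]
      have hp2 : (∫⁻ x in Ici A, Φ x) < ⊤ := by
        have hcong : ∫⁻ x in Ici A, Φ x
            = ∫⁻ x in Ici A, (ENNReal.ofReal (C4 * x ^ (-(5:ℝ)/4))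
              + ENNReal.ofReal (C5 * (x * (Real.log x)^2)⁻¹)) := by
          apply setLIntegral_congr_fun measurableSet_Ici
          intro x hx
          have hx0 : (0:ℝ) ≤ x := le_trans hA0.le hx
          rw [hΦdef]
          simp only
          rw [abs_of_nonneg hx0, if_neg (not_lt.mpr hx)]
        rw [hcong]
        have hm1 : Measurable fun x : ℝ => ENNReal.ofReal (C4 * x ^ (-(5:ℝ)/4)) :=
          (measurable_const.mul (measurable_id.pow measurable_const)).ennreal_ofReal
        rw [lintegral_add_left hm1]
        apply ENNReal.add_lt_top.mpr
        constructor
        · exact tail5_lint hA0 hC40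
        · exact logtail_lint hAe hC50
      calc (∫⁻ x in Ici (0:ℝ), Φ x) ≤ ∫⁻ x in Ico 0 A ∪ Ici A, Φ x :=
          lintegral_mono_set hsub
        _ ≤ (∫⁻ x in Ico (0:ℝ) A, Φ x) + ∫⁻ x in Ici A, Φ x := lintegral_union_le _ _ _
        _ < ⊤ := by
            apply ENNReal.add_lt_top.mpr
            exact ⟨lt_of_le_of_lt hp1 (ENNReal.mul_lt_top ENNReal.ofReal_lt_top ENNReal.ofReal_lt_top), hp2⟩
    have hneg : (∫⁻ x in Iio (0:ℝ), Φ x) ≤ ∫⁻ x in Ici (0:ℝ), Φ x := by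
      have heq : Iio (0:ℝ) = Neg.neg ⁻¹' (Ioi 0) := by
        ext x
        simp only [mem_Iio, mem_preimage, mem_Ioi]
        constructor <;> intro h <;> linarith
      rw [heq, lint_neg_set Φ hΦm _ measurableSet_Ioi hΦsym]
      exact lintegral_mono_set Ioi_subset_Ici_self
    calc (∫⁻ x : ℝ, Φ x) = ∫⁻ x in (univ : Set ℝ), Φ x := by rw [setLIntegral_univ]
      _ ≤ ∫⁻ x in Iio (0:ℝ) ∪ Ici 0, Φ x := by
          apply lintegral_mono_set
          intro x _
          rcases lt_or_ge x 0 with h | h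
          · left; exact h
          · right; exact h
      _ ≤ (∫⁻ x in Iio (0:ℝ), Φ x) + ∫⁻ x in Ici (0:ℝ), Φ x := lintegral_union_le _ _ _
      _ ≤ (∫⁻ x in Ici (0:ℝ), Φ x) + ∫⁻ x in Ici (0:ℝ), Φ x := add_le_add hneg le_rfl
      _ < ⊤ := by
          apply ENNReal.add_lt_top.mpr
          exact ⟨hIci, hIci⟩
  exact lt_of_le_of_lt (lintegral_mono main) houter
end

section
/- Let μ be a σ-finite Borel measure on the unit circle and suppose the ideal I = {P ∈ ℂ[z] : ∫|P|² dμ < ∞} is nonzero. Then I is generated by a single monic polynomial P_μ all of whose roots lie on the unit circle. -/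
/-!
Since μ lives on a bounded set, polynomials are bounded μ-a.e., so the square-integrable
polynomials form an ideal of the principal ideal domain `ℂ[X]`; let `Pμ` be its monic generator.
If `Pμ = (X - z₀) Q` with `‖z₀‖ ≠ 1`, then `|z - z₀| ≥ |1 - ‖z₀‖| > 0` on the circle, so
`|Q| ≤ C |Pμ|` μ-a.e. and `Q` is square-integrable too, so `Pμ ∣ Q`, which is impossible.
-/

open MeasureTheory Polynomial
open scoped ENNReal

theorem lintegral_nnnorm_sq_lt_top_iff_memLp {α E : Type*} [MeasurableSpace α]
    [NormedAddCommGroup E] {μ : Measure α} {f : α → E} (hf : AEStronglyMeasurable f μ) :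
    ∫⁻ x, (‖f x‖₊ : ℝ≥0∞) ^ 2 ∂μ < ⊤ ↔ MemLp f 2 μ := by
  rw [MemLp, and_iff_right hf, eLpNorm_lt_top_iff_lintegral_rpow_enorm_lt_top two_ne_zero
    ENNReal.ofNat_ne_top]
  simp only [enorm_eq_nnnorm, ENNReal.toReal_ofNat, ENNReal.rpow_two]

theorem Polynomial.not_isRoot_of_dvd_of_dvd_X_sub_C_mul {R : Type*} [CommRing R] [IsDomain R]
    {P : R[X]} {a : R} (hP : P ≠ 0) (h : ∀ Q, P ∣ (X - C a) * Q → P ∣ Q) : ¬ P.IsRoot a := by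
  intro hroot
  obtain ⟨Q, rfl⟩ := dvd_iff_isRoot.2 hroot
  have hQ : Q ≠ 0 := right_ne_zero_of_mul hP
  have hdvd : (X - C a) * Q ∣ 1 * Q := by simpa using h Q dvd_rfl
  exact not_isUnit_X_sub_C a (isUnit_of_dvd_one ((mul_dvd_mul_iff_right hQ).1 hdvd))

theorem Polynomial.exists_monic_span_eq {K : Type*} [Field K] {I : Ideal K[X]} (hI : I ≠ ⊥) :
    ∃ P : K[X], P.Monic ∧ I = Ideal.span {P} := by
  classical
  obtain ⟨g, rfl⟩ := (IsPrincipalIdealRing.principal I).principal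
  have hg : g ≠ 0 := by rintro rfl; exact hI (by simp)
  exact ⟨normalize g, monic_normalize hg,
    Ideal.span_singleton_eq_span_singleton.2 (normalize_associated g).symm⟩

section

variable {𝕜 : Type*} [NontriviallyNormedField 𝕜] [ProperSpace 𝕜]

theorem Polynomial.exists_bound_of_norm_le (P : 𝕜[X]) (R : ℝ) :
    ∃ C, ∀ z : 𝕜, ‖z‖ ≤ R → ‖P.eval z‖ ≤ C := by
  obtain ⟨C, hC⟩ := (isCompact_closedBall (0 : 𝕜) R).exists_bound_of_continuousOn
    P.continuous.continuousOn
  exact ⟨C, fun z hz => hC z (mem_closedBall_zero_iff.2 hz)⟩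

variable [MeasurableSpace 𝕜] [BorelSpace 𝕜] {μ : Measure 𝕜} {p : ℝ≥0∞}

theorem Polynomial.memLp_eval_mul {R : ℝ} (hμ : ∀ᵐ z ∂μ, ‖z‖ ≤ R) (Q : 𝕜[X]) {P : 𝕜[X]}
    (hP : MemLp (fun z => P.eval z) p μ) : MemLp (fun z => (Q * P).eval z) p μ := by
  obtain ⟨C, hC⟩ := Q.exists_bound_of_norm_le R
  refine hP.of_le_mul (c := C) (Q * P).continuous.aestronglyMeasurable (hμ.mono fun z hz => ?_)
  rw [eval_mul, norm_mul]
  exact mul_le_mul_of_nonneg_right (hC z hz) (norm_nonneg _)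

theorem Polynomial.memLp_eval_of_memLp_eval_X_sub_C_mul {z₀ : 𝕜} {r : ℝ} (hr : 0 < r)
    (hμ : ∀ᵐ z ∂μ, r ≤ ‖z - z₀‖) {Q : 𝕜[X]}
    (h : MemLp (fun z => ((X - C z₀) * Q).eval z) p μ) : MemLp (fun z => Q.eval z) p μ := by
  refine h.of_le_mul (c := r⁻¹) Q.continuous.aestronglyMeasurable (hμ.mono fun z hz => ?_)
  rw [eval_mul, norm_mul, eval_sub, eval_X, eval_C, le_inv_mul_iff₀ hr]
  exact mul_le_mul_of_nonneg_right hz (norm_nonneg _)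

variable (μ p) in
def Polynomial.memLpIdeal {R : ℝ} (hμ : ∀ᵐ z ∂μ, ‖z‖ ≤ R) : Ideal 𝕜[X] where
  carrier := {P | MemLp (fun z => P.eval z) p μ}
  zero_mem' := by simp
  add_mem' hP hQ := by simp only [Set.mem_ofPred_eq, eval_add]; exact hP.add hQ
  smul_mem' Q _ hP := memLp_eval_mul hμ Q hP

end

theorem square_integrable_polynomials_principal_general (μ : Measure ℂ)
    (hsupp : μ {z : ℂ | ‖z‖ ≠ 1} = 0)
    (hne : ∃ P : Polynomial ℂ, P ≠ 0 ∧ (∫⁻ z, (‖P.eval z‖₊ : ENNReal)^2 ∂μ) < ⊤) :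
    ∃ Pμ : Polynomial ℂ, Pμ.Monic ∧ (∀ z : ℂ, Pμ.IsRoot z → ‖z‖ = 1) ∧
      ∀ P : Polynomial ℂ,
        ((∫⁻ z, (‖P.eval z‖₊ : ENNReal)^2 ∂μ) < ⊤ ↔ Pμ ∣ P) := by
  have hae : ∀ᵐ z ∂μ, ‖z‖ = 1 := ae_iff.2 hsupp
  set I := memLpIdeal μ 2 (hae.mono fun _ hz => hz.le)
  have hmem (P : ℂ[X]) : ∫⁻ z, (‖P.eval z‖₊ : ℝ≥0∞) ^ 2 ∂μ < ⊤ ↔ P ∈ I :=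
    lintegral_nnnorm_sq_lt_top_iff_memLp P.continuous.aestronglyMeasurable
  obtain ⟨P₀, hP₀, hP₀I⟩ := hne
  have hI : I ≠ ⊥ := fun h => hP₀ (by simpa [h] using (hmem P₀).1 hP₀I)
  obtain ⟨Pμ, hmonic, hspan⟩ := exists_monic_span_eq hI
  refine ⟨Pμ, hmonic, fun z₀ hroot => ?_, fun P => by rw [hmem, hspan, Ideal.mem_span_singleton]⟩
  by_contra hz₀
  refine not_isRoot_of_dvd_of_dvd_X_sub_C_mul hmonic.ne_zero (fun Q hQ => ?_) hroot
  rw [← Ideal.mem_span_singleton, ← hspan] at hQ ⊢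
  exact memLp_eval_of_memLp_eval_X_sub_C_mul (abs_pos.2 (sub_ne_zero.2 (Ne.symm hz₀)))
    (hae.mono fun z hz => hz ▸ abs_norm_sub_norm_le z z₀) hQ

theorem square_integrable_polynomials_principal (μ : Measure ℂ) [SigmaFinite μ]
    (hsupp : μ {z : ℂ | ‖z‖ ≠ 1} = 0)
    (hne : ∃ P : Polynomial ℂ, P ≠ 0 ∧ (∫⁻ z, (‖P.eval z‖₊ : ENNReal)^2 ∂μ) < ⊤) :
    ∃ Pμ : Polynomial ℂ, Pμ.Monic ∧ (∀ z : ℂ, Pμ.IsRoot z → ‖z‖ = 1) ∧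
      ∀ P : Polynomial ℂ,
        ((∫⁻ z, (‖P.eval z‖₊ : ENNReal)^2 ∂μ) < ⊤ ↔ Pμ ∣ P) :=
  square_integrable_polynomials_principal_general μ hsupp hne
end

section
/- Fix z₀ with |z₀| = 1 and ε_n → 0⁺ with n·ε_n → ∞. Define P_n(z) = −(1−ε_n) conj(z₀) (1 − (1−ε_n)ⁿ conj(z₀)ⁿ zⁿ)/(1 − (1−ε_n) conj(z₀) z). Then P_n is a polynomial of degree n−1, P_n(z) → 1/(z − z₀) pointwise for every z on the unit circle with z ≠ z₀, and |P_n(z)| ≤ 2/|z − z₀| for all z on the unit circle with z ≠ z₀ and all sufficiently large n. -/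
/-!
With `w = (1 - ε) conj z₀`, the function `-w (1 - (wz)ⁿ) / (1 - wz) = -∑_{k<n} w^{k+1} zᵏ` is the
Taylor polynomial at `0` of `1 / (z - 1/w)`, whose pole `z₀ / (1 - ε)` lies just outside the unit
circle. On the circle `|wz| = 1 - ε`, so the error term satisfies `|(wz)ⁿ| ≤ e^{-nε} → 0` and the
polynomials converge to `-conj z₀ / (1 - conj z₀ z) = 1 / (z - z₀)`. The uniform bound follows from
`|1 - (wz)ⁿ| ≤ 2` and `|1 - (1 - ε) u| ≥ (1 - ε) |1 - u|` for `|u| ≤ 1`.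
-/

open Complex ComplexConjugate Filter Polynomial Finset Topology

theorem Polynomial.degree_sum_range_C_mul_X_pow {R : Type*} [Semiring R] (f : ℕ → R) {n : ℕ}
    (hf : f n ≠ 0) : (∑ i ∈ range (n + 1), C (f i) * X ^ i).degree = (n : WithBot ℕ) := by
  apply degree_eq_of_le_of_coeff_ne_zero
  · refine (degree_sum_le _ _).trans (Finset.sup_le fun i hi => ?_)
    exact (degree_C_mul_X_pow_le _ _).trans
      (by exact_mod_cast Nat.lt_succ_iff.mp (mem_range.mp hi))
  · simpa [finsetSum_coeff, coeff_C_mul_X_pow] using hf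

theorem exists_polynomial_eval_eq_neg_mul_one_sub_pow_div {K : Type*} [Field K] {w : K}
    (hw : w ≠ 0) {n : ℕ} (hn : 1 ≤ n) :
    ∃ Q : K[X], Q.degree = (n - 1 : ℕ) ∧
      ∀ z, w * z ≠ 1 → Q.eval z = -w * (1 - (w * z) ^ n) / (1 - w * z) := by
  obtain ⟨m, rfl⟩ := Nat.exists_eq_add_of_le' hn
  refine ⟨C (-w) * ∑ i ∈ range (m + 1), C (w ^ i) * X ^ i, ?_, fun z hwz => ?_⟩
  · rw [degree_C_mul (neg_ne_zero.mpr hw), degree_sum_range_C_mul_X_pow _ (pow_ne_zero m hw),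
      Nat.add_sub_cancel]
  · have hgeom : ∑ i ∈ range (m + 1), (w * z) ^ i = (1 - (w * z) ^ (m + 1)) / (1 - w * z) :=
      eq_div_of_mul_eq (sub_ne_zero.mpr hwz.symm) (by rw [mul_comm, mul_neg_geom_sum])
    simp only [eval_mul, eval_C, eval_finsetSum, eval_pow, eval_X, ← mul_pow, hgeom, mul_div_assoc]

theorem norm_neg_mul_one_sub_pow_div_le {𝕜 : Type*} [NormedField 𝕜] {w z : 𝕜}
    (hwz : ‖w * z‖ ≤ 1) (n : ℕ) :
    ‖-w * (1 - (w * z) ^ n) / (1 - w * z)‖ ≤ 2 * ‖w‖ / ‖1 - w * z‖ := by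
  have hnum : ‖1 - (w * z) ^ n‖ ≤ 2 := calc
    ‖1 - (w * z) ^ n‖ ≤ 1 + ‖w * z‖ ^ n := by simpa using norm_sub_le (1 : 𝕜) ((w * z) ^ n)
    _ ≤ 2 := by linarith [pow_le_one₀ (norm_nonneg _) hwz (n := n)]
  rw [norm_div, norm_mul, norm_neg, mul_comm 2]
  gcongr

theorem tendsto_neg_mul_one_sub_pow_div {𝕜 : Type*} [NormedField 𝕜] {w : ℕ → 𝕜} {w₀ z : 𝕜}
    (hw : Tendsto w atTop (𝓝 w₀)) (hpow : Tendsto (fun n => (w n * z) ^ n) atTop (𝓝 0))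
    (hwz : w₀ * z ≠ 1) :
    Tendsto (fun n => -w n * (1 - (w n * z) ^ n) / (1 - w n * z)) atTop
      (𝓝 (-w₀ / (1 - w₀ * z))) := by
  have h := (hw.neg.mul ((tendsto_const_nhds (x := (1 : 𝕜))).sub hpow)).div
    (tendsto_const_nhds.sub (hw.mul_const z)) (sub_ne_zero.mpr hwz.symm)
  rwa [sub_zero, mul_one] at h

/-- Expanding `1 - r u = (1 - r) + r (1 - u)`, the cross term `2 r (1 - r) Re (1 - u)` is
nonnegative. -/
theorem mul_norm_one_sub_le_norm_one_sub_ofReal_mul {r : ℝ} (hr0 : 0 ≤ r) (hr1 : r ≤ 1) {u : ℂ}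
    (hu : ‖u‖ ≤ 1) : r * ‖1 - u‖ ≤ ‖1 - r * u‖ := by
  have hre : u.re ≤ 1 := (re_le_norm u).trans hu
  rw [← pow_le_pow_iff_left₀ (by positivity) (norm_nonneg _) two_ne_zero, mul_pow, Complex.sq_norm,
    Complex.sq_norm]
  simp only [normSq_apply, sub_re, sub_im, mul_re, mul_im, ofReal_re, ofReal_im, one_re, one_im]
  nlinarith [mul_nonneg (mul_nonneg hr0 (sub_nonneg.mpr hr1)) (sub_nonneg.mpr hre)]

theorem tendsto_one_sub_pow_of_tendsto_mul_atTop {ε : ℕ → ℝ} (hε : ∀ n, ε n ≤ 1)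
    (h : Tendsto (fun n : ℕ => (n : ℝ) * ε n) atTop atTop) :
    Tendsto (fun n => (1 - ε n) ^ n) atTop (𝓝 0) := by
  have hle (n : ℕ) : (1 - ε n) ^ n ≤ Real.exp (-(n * ε n)) := calc
    (1 - ε n) ^ n ≤ Real.exp (-ε n) ^ n :=
      pow_le_pow_left₀ (sub_nonneg.mpr (hε n)) (by linarith [Real.add_one_le_exp (-ε n)]) n
    _ = Real.exp (-(n * ε n)) := by rw [← Real.exp_nat_mul, mul_neg]
  exact squeeze_zero (fun n => pow_nonneg (sub_nonneg.mpr (hε n)) n) hle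
    (Real.tendsto_exp_atBot.comp (tendsto_neg_atTop_atBot.comp h))

theorem one_sub_conj_mul_eq {z₀ : ℂ} (hz₀ : ‖z₀‖ = 1) (z : ℂ) :
    1 - conj z₀ * z = conj z₀ * (z₀ - z) := by
  rw [mul_sub, conj_mul', hz₀, ofReal_one, one_pow]

theorem tendsto_ofReal_mul_conj_mul_div {z₀ z : ℂ} (hz₀ : ‖z₀‖ = 1) (hz : ‖z‖ = 1)
    (hzz₀ : z ≠ z₀) {r : ℕ → ℝ} (hr : Tendsto r atTop (𝓝 1))
    (hrpow : Tendsto (fun n => r n ^ n) atTop (𝓝 0)) :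
    Tendsto (fun n => -(r n * conj z₀) * (1 - (r n * conj z₀ * z) ^ n) / (1 - r n * conj z₀ * z))
      atTop (𝓝 (1 / (z - z₀))) := by
  have hconj : conj z₀ ≠ 0 := by rw [← norm_ne_zero_iff, norm_conj, hz₀]; exact one_ne_zero
  have hw : Tendsto (fun n => (r n : ℂ) * conj z₀) atTop (𝓝 (conj z₀)) := by
    simpa using ((continuous_ofReal.tendsto _).comp hr).mul_const (conj z₀)
  have hpow : Tendsto (fun n => ((r n : ℂ) * conj z₀ * z) ^ n) atTop (𝓝 0) := by
    rw [tendsto_zero_iff_norm_tendsto_zero]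
    simpa only [norm_pow, norm_mul, norm_real, norm_conj, hz₀, hz, mul_one, norm_zero] using
      hrpow.norm
  have hden : 1 - conj z₀ * z = conj z₀ * (z₀ - z) := one_sub_conj_mul_eq hz₀ z
  have hlim : -conj z₀ / (1 - conj z₀ * z) = 1 / (z - z₀) := by
    rw [hden, ← neg_sub z, mul_neg, neg_div_neg_eq, div_mul_cancel_left₀ hconj, one_div]
  have hwz : conj z₀ * z ≠ 1 := by
    rw [← sub_ne_zero, ← neg_sub, neg_ne_zero, hden]
    exact mul_ne_zero hconj (sub_ne_zero.mpr hzz₀.symm)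
  simpa only [neg_mul, hlim] using tendsto_neg_mul_one_sub_pow_div hw hpow hwz

theorem norm_ofReal_mul_conj_mul_div_le {z₀ z : ℂ} (hz₀ : ‖z₀‖ = 1) (hz : ‖z‖ = 1)
    (hzz₀ : z ≠ z₀) {r : ℝ} (hr0 : 0 < r) (hr1 : r ≤ 1) (n : ℕ) :
    ‖-(r * conj z₀) * (1 - (r * conj z₀ * z) ^ n) / (1 - r * conj z₀ * z)‖ ≤ 2 / ‖z - z₀‖ := by
  have hu : ‖conj z₀ * z‖ = 1 := by rw [norm_mul, norm_conj, hz₀, hz, one_mul]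
  have hsub : ‖1 - conj z₀ * z‖ = ‖z - z₀‖ := by
    rw [one_sub_conj_mul_eq hz₀, norm_mul, norm_conj, hz₀, one_mul, norm_sub_rev]
  have hpos : 0 < ‖1 - conj z₀ * z‖ := hsub ▸ norm_pos_iff.mpr (sub_ne_zero.mpr hzz₀)
  have hw : ‖(r : ℂ) * conj z₀‖ = r := by
    rw [norm_mul, norm_conj, hz₀, norm_real, Real.norm_of_nonneg hr0.le, mul_one]
  calc _ ≤ 2 * ‖(r : ℂ) * conj z₀‖ / ‖1 - r * conj z₀ * z‖ :=
        norm_neg_mul_one_sub_pow_div_le (by rw [norm_mul, hw, hz, mul_one]; exact hr1) n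
    _ ≤ 2 * r / (r * ‖1 - conj z₀ * z‖) := by
        rw [hw, mul_assoc]
        exact div_le_div_of_nonneg_left (by positivity) (mul_pos hr0 hpos)
          (mul_norm_one_sub_le_norm_one_sub_ofReal_mul hr0.le hr1 hu.le)
    _ = 2 / ‖z - z₀‖ := by rw [← hsub]; field_simp

theorem approximating_polynomials (z₀ : ℂ) (hz₀ : ‖z₀‖ = 1)
    (ε : ℕ → ℝ) (hε : ∀ n, 0 < ε n ∧ ε n < 1)
    (hε0 : Tendsto ε atTop (nhds 0))
    (hnε : Tendsto (fun n : ℕ => (n : ℝ) * ε n) atTop atTop) :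
    (∀ n : ℕ, 1 ≤ n → ∃ Q : Polynomial ℂ, Q.degree = (n - 1 : ℕ) ∧
        ∀ z : ℂ, ‖z‖ = 1 →
          Q.eval z = -((1 - ε n : ℝ) : ℂ) * (starRingEnd ℂ) z₀ *
            (1 - (((1 - ε n : ℝ) : ℂ) * (starRingEnd ℂ) z₀ * z) ^ n) /
              (1 - ((1 - ε n : ℝ) : ℂ) * (starRingEnd ℂ) z₀ * z)) ∧
    (∀ z : ℂ, ‖z‖ = 1 → z ≠ z₀ →
        Tendsto (fun n : ℕ =>
            -((1 - ε n : ℝ) : ℂ) * (starRingEnd ℂ) z₀ *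
              (1 - (((1 - ε n : ℝ) : ℂ) * (starRingEnd ℂ) z₀ * z) ^ n) /
                (1 - ((1 - ε n : ℝ) : ℂ) * (starRingEnd ℂ) z₀ * z))
          atTop (nhds (1 / (z - z₀)))) ∧
    (∃ N : ℕ, ∀ n ≥ N, ∀ z : ℂ, ‖z‖ = 1 → z ≠ z₀ →
        ‖(-((1 - ε n : ℝ) : ℂ) * (starRingEnd ℂ) z₀ *
              (1 - (((1 - ε n : ℝ) : ℂ) * (starRingEnd ℂ) z₀ * z) ^ n) /
                (1 - ((1 - ε n : ℝ) : ℂ) * (starRingEnd ℂ) z₀ * z))‖ ≤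
          2 / ‖z - z₀‖) := by
  have hr0 (n : ℕ) : 0 < 1 - ε n := sub_pos.mpr (hε n).2
  refine ⟨fun n hn => ?_, fun z hz hzz₀ => ?_, ⟨0, fun n _ z hz hzz₀ => ?_⟩⟩
  · have hconj : conj z₀ ≠ 0 := by rw [← norm_ne_zero_iff, norm_conj, hz₀]; exact one_ne_zero
    obtain ⟨Q, hdeg, hQ⟩ := exists_polynomial_eval_eq_neg_mul_one_sub_pow_div
      (mul_ne_zero (ofReal_ne_zero.mpr (hr0 n).ne') hconj) hn
    refine ⟨Q, hdeg, fun z hz => ?_⟩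
    have hwz : ((1 - ε n : ℝ) : ℂ) * conj z₀ * z ≠ 1 := fun h => by
      have := congrArg norm h
      rw [norm_mul, norm_mul, norm_conj, hz₀, hz, norm_real, Real.norm_of_nonneg (hr0 n).le,
        mul_one, mul_one, norm_one] at this
      linarith [(hε n).1]
    simpa only [neg_mul] using hQ z hwz
  · simpa only [neg_mul] using tendsto_ofReal_mul_conj_mul_div hz₀ hz hzz₀
      (by simpa using hε0.const_sub 1)
      (tendsto_one_sub_pow_of_tendsto_mul_atTop (fun n => (hε n).2.le) hnε)
  · simpa only [neg_mul] using
      norm_ofReal_mul_conj_mul_div_le hz₀ hz hzz₀ (hr0 n) (sub_le_self 1 (hε n).1.le) n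
end
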